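/- arXiv:1009.4528 — 6 statements merged into one kernel-verified Lean document; each statement's English description precedes it below -/
import Mathlib

section
/- If ε and δ are real numbers with 0 < ε < 1/5 and 0 < δ < 1/5, and k, m are positive integers such that |(1+ε)^k − m| ≤ δ, then |log(1+ε) − (log m)/k| ≤ 2δ/(k·m). -/
theorem stmt_1 (ε δ : ℝ) (hε0 : 0 < ε) (hε1 : ε < 1/5) (hδ0 : 0 < δ) (hδ1 : δ < 1/5)
    (k m : ℕ) (hk : 0 < k) (hm : 0 < m)
    (h : |(1 + ε) ^ k - (m : ℝ)| ≤ δ) :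
    |Real.log (1 + ε) - Real.log m / k| ≤ 2 * δ / (k * m) := by
  have hm1 : (1:ℝ) ≤ m := Nat.one_le_cast.mpr hm
  have hk1 : (1:ℝ) ≤ k := Nat.one_le_cast.mpr hk
  set a : ℝ := (1+ε)^k with ha
  have ha0 : 0 < a := pow_pos (by linarith) k
  have habs := abs_le.mp h
  have hau : a ≤ m + δ := by linarith [habs.2]
  have hal : (m:ℝ) - δ ≤ a := by linarith [habs.1]
  have hm0 : (0:ℝ) < m := by linarith
  have hk0 : (0:ℝ) < k := by linarith
  have hlog : Real.log (1+ε) = Real.log a / k := by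
    rw [ha, Real.log_pow]
    field_simp
  have key : |Real.log a - Real.log m| ≤ 2*δ/m := by
    rw [abs_le]
    constructor
    · have h1 : Real.log m - Real.log a = Real.log ((m:ℝ)/a) :=
        (Real.log_div (ne_of_gt hm0) (ne_of_gt ha0)).symm
      have h2 : Real.log ((m:ℝ)/a) ≤ (m:ℝ)/a - 1 :=
        Real.log_le_sub_one_of_pos (by positivity)
      have h3 : (m:ℝ)/a - 1 ≤ 2*δ/m := by
        rw [div_sub_one (ne_of_gt ha0), div_le_div_iff₀ ha0 hm0]
        nlinarith [mul_pos hδ0 hm0]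
      linarith
    · have h1 : Real.log a - Real.log m = Real.log (a/(m:ℝ)) :=
        (Real.log_div (ne_of_gt ha0) (ne_of_gt hm0)).symm
      have h2 : Real.log (a/(m:ℝ)) ≤ a/(m:ℝ) - 1 :=
        Real.log_le_sub_one_of_pos (by positivity)
      have h3 : a/(m:ℝ) - 1 ≤ 2*δ/m := by
        rw [div_sub_one (ne_of_gt hm0), div_le_div_iff₀ hm0 hm0]
        nlinarith [mul_pos hδ0 hm0]
      linarith
  rw [hlog, div_sub_div_same, abs_div, abs_of_pos hk0]
  calc |Real.log a - Real.log m| / k ≤ (2*δ/m) / k := by gcongr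
    _ = 2 * δ / (k * m) := by field_simp
end

section
/- For every positive real c there exist arbitrarily small positive real numbers ε (i.e., for every δ > 0 there exists ε with 0 < ε < δ) such that for every positive integer n, the distance from (1+ε)^n to the nearest integer is greater than 2^{-17} · ε / |log ε|. -/
/-!
Put `a = 2⁻ᵏ` and look for `x = 1 + ε` in `[1 + a, 1 + 2a]` whose powers all stay `3η` away from
the integers, where `η = a / (2¹⁵ k)` and `3η` exceeds `2⁻¹⁷ ε / |log ε|`. While
`n ≤ N₀ = 2ᵏ⁻²` this holds for every such `x`, because `x ^ n ∈ [1 + a, 1.7]`. For larger `n`,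
intervals are refined one exponent `p` at a time: an interval is cut, through `x ↦ x ^ p`, into
the pieces whose images avoid the `3η`-neighbourhoods of the integers. Pieces whose image is
shorter than `η` are thrown away. What is lost lies where `x ^ p` is `4η`-close to an integer.
On an interval whose `p`-th power image has length at least `1/4` this happens on a proportion
`O(η)` only: by concavity of the `p`-th root, each bad window is shorter than the gap before it
by a factor `O(η)`. The intervals of generation `i - M` have such images at the exponent of
generation `i`, because their images have grown by a factor `(1 + a) ^ M ≥ 1 / (4η)` since
they were cut. So the measures `rᵢ` of the generations satisfy
`rᵢ ≤ rᵢ₊₁ + 80 η rᵢ₊₁₋M` with `80 η M` small, which forces all `rᵢ` to be positive. The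
generations are then nested nonempty compact sets, and any common point works.
-/

open MeasureTheory Set

noncomputable section

namespace PowersAvoidingIntegers

lemma natCast_mul_pow_mul_sub_le_pow_sub_pow {x y : ℝ} (hy : 0 ≤ y) (hyx : y ≤ x) (n : ℕ) :
    n * y ^ (n - 1) * (x - y) ≤ x ^ n - y ^ n := by
  have hterm : ∀ i ∈ Finset.range n, y ^ (n - 1) ≤ x ^ i * y ^ (n - 1 - i) := fun i hi =>
    calc y ^ (n - 1) = y ^ i * y ^ (n - 1 - i) := by
          rw [← pow_add]; congr 1; have := Finset.mem_range.1 hi; omega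
      _ ≤ x ^ i * y ^ (n - 1 - i) := by gcongr
  calc n * y ^ (n - 1) * (x - y) = (∑ _i ∈ Finset.range n, y ^ (n - 1)) * (x - y) := by simp
    _ ≤ (∑ i ∈ Finset.range n, x ^ i * y ^ (n - 1 - i)) * (x - y) :=
        mul_le_mul_of_nonneg_right (Finset.sum_le_sum hterm) (by linarith)
    _ = x ^ n - y ^ n := geom_sum₂_mul x y n

lemma pow_sub_pow_le_natCast_mul_pow_mul_sub {x y : ℝ} (hy : 0 ≤ y) (hyx : y ≤ x) (n : ℕ) :
    x ^ n - y ^ n ≤ n * x ^ (n - 1) * (x - y) := by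
  have h := (le_abs_self _).trans (abs_pow_sub_pow_le x y n)
  rw [abs_of_nonneg (sub_nonneg.2 hyx), abs_of_nonneg (hy.trans hyx), abs_of_nonneg hy,
    max_eq_left hyx] at h
  linarith

lemma pow_mul_pow_sub_pow_le {u v : ℝ} (hu : 1 ≤ u) (huv : u ≤ v) (j d : ℕ) :
    u ^ d * (v ^ j - u ^ j) ≤ v ^ (j + d) - u ^ (j + d) := by
  have hud : u ^ d ≤ v ^ d := pow_le_pow_left₀ (by linarith) huv d
  have huj : u ^ j ≤ v ^ j := pow_le_pow_left₀ (by linarith) huv j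
  rw [pow_add, pow_add]
  nlinarith [pow_nonneg (by linarith : (0 : ℝ) ≤ u) j]

lemma le_abs_sub_intCast {ρ y : ℝ} {m : ℤ} (h₁ : m + ρ ≤ y) (h₂ : y ≤ m + 1 - ρ) (m' : ℤ) :
    ρ ≤ |y - m'| := by
  rcases le_or_gt m' m with h | h
  · have : (m' : ℝ) ≤ m := by exact_mod_cast h
    exact le_abs.2 (Or.inl (by linarith))
  · have : (m : ℝ) + 1 ≤ m' := by exact_mod_cast h
    exact le_abs.2 (Or.inr (by linarith))

lemma rpow_inv_natCast_le_iff {p : ℕ} (hp : p ≠ 0) {α x : ℝ} (hα : 0 ≤ α) (hx : 0 ≤ x) :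
    α ^ (p⁻¹ : ℝ) ≤ x ↔ α ≤ x ^ p := by
  conv_lhs => rw [← Real.pow_rpow_inv_natCast hx hp]
  exact Real.rpow_le_rpow_iff hα (by positivity) (by positivity)

lemma le_rpow_inv_natCast_iff {p : ℕ} (hp : p ≠ 0) {β x : ℝ} (hβ : 0 ≤ β) (hx : 0 ≤ x) :
    x ≤ β ^ (p⁻¹ : ℝ) ↔ x ^ p ≤ β := by
  conv_lhs => rw [← Real.pow_rpow_inv_natCast hx hp]
  exact Real.rpow_le_rpow_iff (by positivity) hβ (by positivity)

lemma pos_of_le_add_mul_delay {r : ℕ → ℝ} {c : ℝ} {M : ℕ} (hr : Antitone r)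
    (hr₀ : ∀ i, 0 ≤ r i) (h₀ : 0 < r 0) (hc : 0 ≤ c) (hM : 0 < M) (hcM : 8 * (M * c) ≤ 1)
    (hstep : ∀ i, r i ≤ r (i + 1) + c * r (i + 1 - M)) (i : ℕ) : 0 < r i := by
  have hblock : ∀ j t, t ≤ M → r (j * M) ≤ r (j * M + t) + t * c * r ((j - 1) * M) := by
    intro j t ht
    induction t with
    | zero => simp
    | succ t ih =>
      have hback : r (j * M + t + 1 - M) ≤ r ((j - 1) * M) :=
        hr (by rw [Nat.sub_one_mul]; omega)
      have := hstep (j * M + t)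
      rw [← add_assoc]
      push_cast
      nlinarith [ih (by omega), mul_le_mul_of_nonneg_left hback hc]
  -- over one block of `M` steps at most a quarter of the value is lost
  have hhalve : ∀ j, r (j * M) ≤ 2 * r ((j + 1) * M) := by
    have key : ∀ j, r ((j - 1) * M) ≤ 2 * r (j * M) → r (j * M) ≤ 2 * r ((j + 1) * M) := by
      intro j hprev
      have h := hblock j M le_rfl
      rw [← Nat.succ_mul] at h
      nlinarith [mul_le_mul_of_nonneg_left hprev (by positivity : (0 : ℝ) ≤ M * c),
        hr₀ ((j + 1) * M)]
    intro j
    induction j with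
    | zero => exact key 0 (by simp; linarith)
    | succ j ih => exact key (j + 1) (by simpa using ih)
  have hpos : ∀ j, 0 < r (j * M) := by
    intro j
    induction j with
    | zero => simpa using h₀
    | succ j ih => linarith [hhalve j]
  exact (hpos i).trans_le (hr (Nat.le_mul_of_pos_right i hM))

def nearInt (p : ℕ) (ρ : ℝ) : Set ℝ := {x | ∃ m : ℤ, |x ^ p - m| < ρ}

section ClampedRoot

variable {p : ℕ} {u v : ℝ}

/-- The inverse of `x ↦ x ^ p` on `[u, v]`, extended by constants outside `[u ^ p, v ^ p]`. -/
def clampedRoot (p : ℕ) (u v t : ℝ) : ℝ := min v (max (u ^ p) t ^ (p⁻¹ : ℝ))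

lemma clampedRoot_le (t : ℝ) : clampedRoot p u v t ≤ v := min_le_left _ _

lemma le_clampedRoot (hp : p ≠ 0) (hu : 0 ≤ u) (huv : u ≤ v) (t : ℝ) :
    u ≤ clampedRoot p u v t :=
  le_min huv ((le_rpow_inv_natCast_iff hp ((pow_nonneg hu p).trans (le_max_left _ _)) hu).2
    (le_max_left _ _))

lemma clampedRoot_mono (hu : 0 ≤ u) : Monotone (clampedRoot p u v) := fun _ _ hst =>
  min_le_min le_rfl (Real.rpow_le_rpow ((pow_nonneg hu p).trans (le_max_left _ _))
    (max_le_max le_rfl hst) (by positivity))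

lemma mem_Icc_clampedRoot (hp : p ≠ 0) (hu : 0 ≤ u) {x t₁ t₂ : ℝ} (hx : x ∈ Icc u v)
    (h₁ : t₁ ≤ x ^ p) (h₂ : x ^ p ≤ t₂) :
    x ∈ Icc (clampedRoot p u v t₁) (clampedRoot p u v t₂) := by
  have hx₀ : 0 ≤ x := hu.trans hx.1
  have hU : ∀ t, 0 ≤ max (u ^ p) t := fun t => (pow_nonneg hu p).trans (le_max_left _ _)
  exact ⟨(min_le_right _ _).trans ((rpow_inv_natCast_le_iff hp (hU t₁) hx₀).2
      (max_le (pow_le_pow_left₀ hu hx.1 p) h₁)),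
    le_min hx.2 ((le_rpow_inv_natCast_iff hp (hU t₂) hx₀).2 (le_max_of_le_right h₂))⟩

lemma concaveOn_clampedRoot (hu : 0 ≤ u) : ConcaveOn ℝ (Ici (u ^ p)) (clampedRoot p u v) := by
  have hroot : ConcaveOn ℝ (Ici (u ^ p)) fun t : ℝ => t ^ (p⁻¹ : ℝ) :=
    (Real.concaveOn_rpow (by positivity) (Nat.cast_inv_le_one p)).subset
      (Ici_subset_Ici.2 (pow_nonneg hu p)) (convex_Ici _)
  refine ((concaveOn_const v (convex_Ici _)).inf hroot).congr fun t ht => ?_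
  simp [clampedRoot, max_eq_right (mem_Ici.1 ht)]

lemma natCast_mul_pow_mul_clampedRoot_sub_le (hp : p ≠ 0) (hu : 0 ≤ u) {t₁ t₂ : ℝ}
    (ht : t₁ ≤ t₂) :
    p * u ^ (p - 1) * (clampedRoot p u v t₂ - clampedRoot p u v t₁) ≤ t₂ - t₁ := by
  set y₁ := max (u ^ p) t₁ ^ (p⁻¹ : ℝ)
  set y₂ := max (u ^ p) t₂ ^ (p⁻¹ : ℝ)
  have hU₁ : 0 ≤ max (u ^ p) t₁ := (pow_nonneg hu p).trans (le_max_left _ _)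
  have hU₂ : 0 ≤ max (u ^ p) t₂ := (pow_nonneg hu p).trans (le_max_left _ _)
  have huy₁ : u ≤ y₁ := (le_rpow_inv_natCast_iff hp hU₁ hu).2 (le_max_left _ _)
  have hy₁₂ : y₁ ≤ y₂ := Real.rpow_le_rpow hU₁ (max_le_max le_rfl ht) (by positivity)
  have hmin : min v y₂ - min v y₁ ≤ y₂ - y₁ :=
    (le_abs_self _).trans ((abs_min_sub_min_le_max _ _ _ _).trans
      (by simp [abs_of_nonneg (sub_nonneg.2 hy₁₂), hy₁₂]))
  have hmax : max (u ^ p) t₂ - max (u ^ p) t₁ ≤ t₂ - t₁ :=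
    (le_abs_self _).trans ((abs_max_sub_max_le_max _ _ _ _).trans
      (by simp [abs_of_nonneg (sub_nonneg.2 ht), ht]))
  calc p * u ^ (p - 1) * (min v y₂ - min v y₁) ≤ p * u ^ (p - 1) * (y₂ - y₁) := by gcongr
    _ ≤ p * y₁ ^ (p - 1) * (y₂ - y₁) := by gcongr
    _ ≤ y₂ ^ p - y₁ ^ p := natCast_mul_pow_mul_sub_le_pow_sub_pow (hu.trans huy₁) hy₁₂ p
    _ = max (u ^ p) t₂ - max (u ^ p) t₁ := by
        rw [Real.rpow_inv_natCast_pow hU₂ hp, Real.rpow_inv_natCast_pow hU₁ hp]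
    _ ≤ t₂ - t₁ := hmax

end ClampedRoot

lemma one_le_eight_mul_natCast_mul_pow_mul_sub {p : ℕ} {u v : ℝ} (hu : 1 ≤ u) (huv : u ≤ v)
    (hgap : 1 / 4 ≤ v ^ p - u ^ p) : 1 ≤ 8 * (p * u ^ (p - 1)) * (v - u) := by
  have hp : p ≠ 0 := by rintro rfl; norm_num at hgap
  have hU : 1 ≤ u ^ p := one_le_pow₀ hu
  -- cut `[u, v]` down to `[u, w]`, whose image has length between `1/4` and `1`
  set r := (u ^ p + 1) ^ (p⁻¹ : ℝ)
  set w := min v r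
  have hr : r ^ p = u ^ p + 1 := Real.rpow_inv_natCast_pow (by positivity) hp
  have huw : u ≤ w :=
    le_min huv ((le_rpow_inv_natCast_iff hp (by positivity) (by positivity)).2 (by linarith))
  have hw₀ : 0 < w := by linarith
  have hwp : w ^ p ≤ u ^ p + 1 := hr ▸ pow_le_pow_left₀ hw₀.le (min_le_right _ _) p
  have hwgap : 1 / 4 ≤ w ^ p - u ^ p := by
    rcases min_choice v r with h | h <;> simp only [w, h, hr] <;> linarith
  have hpow : w ^ (p - 1) ≤ 2 * u ^ (p - 1) := by
    refine le_of_mul_le_mul_right ?_ hw₀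
    calc w ^ (p - 1) * w = w ^ p := pow_sub_one_mul hp w
      _ ≤ 2 * u ^ p := by linarith
      _ = 2 * u ^ (p - 1) * u := by rw [mul_assoc, pow_sub_one_mul hp]
      _ ≤ 2 * u ^ (p - 1) * w := by gcongr
  have hmv := pow_sub_pow_le_natCast_mul_pow_mul_sub (by linarith) huw p
  have hwv : w ≤ v := min_le_left _ _
  nlinarith [mul_le_mul_of_nonneg_right hpow (by linarith : (0 : ℝ) ≤ w - u),
    (by positivity : (0 : ℝ) ≤ p * u ^ (p - 1))]

-- By concavity, `clampedRoot` rises over the window of length `2ρ` at most `2ρ / (1 - 2ρ)` times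
-- as much as over the gap of length `1 - 2ρ` before it.
lemma clampedRoot_add_sub_le {p : ℕ} {u v ρ s : ℝ} (hu : 0 ≤ u) (hρ : 0 < ρ) (hρ₆ : 6 * ρ ≤ 1)
    (hs : u ^ p ≤ s - 1 + ρ) :
    clampedRoot p u v (s + ρ) - clampedRoot p u v (s - ρ) ≤
      3 * ρ * (clampedRoot p u v (s - ρ) - clampedRoot p u v (s - 1 - ρ)) := by
  set h := clampedRoot p u v
  have hmono : Monotone h := clampedRoot_mono hu
  have hslope := (concaveOn_clampedRoot (v := v) hu).slope_anti_adjacent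
    (x := s - 1 + ρ) (y := s - ρ) (z := s + ρ) (mem_Ici.2 hs) (mem_Ici.2 (by linarith))
    (by linarith) (by linarith)
  rw [div_le_div_iff₀ (by linarith) (by linarith)] at hslope
  have hgap : 0 ≤ h (s - ρ) - h (s - 1 + ρ) := sub_nonneg.2 (hmono (by linarith))
  have hwin : 0 ≤ h (s + ρ) - h (s - ρ) := sub_nonneg.2 (hmono (by linarith))
  have hprev : h (s - 1 - ρ) ≤ h (s - 1 + ρ) := hmono (by linarith)
  nlinarith

lemma sum_clampedRoot_sub_le {p : ℕ} {u v ρ : ℝ} (hu : 1 ≤ u) (huv : u ≤ v)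
    (hgap : 1 / 4 ≤ v ^ p - u ^ p) (hρ : 0 < ρ) (hρ₆ : 6 * ρ ≤ 1) {A : ℤ} (hA : u ^ p ≤ A + ρ)
    (n : ℕ) :
    ∑ i ∈ Finset.range n, (clampedRoot p u v (A + i + ρ) - clampedRoot p u v (A + i - ρ)) ≤
      20 * ρ * (v - u) := by
  have hp : p ≠ 0 := by rintro rfl; norm_num at hgap
  set h := clampedRoot p u v
  have hmono : Monotone h := clampedRoot_mono (by linarith)
  have hfirst : h (A + ρ) - h (A - ρ) ≤ 16 * ρ * (v - u) := by
    have hlip := natCast_mul_pow_mul_clampedRoot_sub_le (u := u) (v := v) hp (by linarith)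
      (by linarith : (A : ℝ) - ρ ≤ A + ρ)
    have hlen := one_le_eight_mul_natCast_mul_pow_mul_sub hu huv hgap
    have hnn : 0 ≤ h (A + ρ) - h (A - ρ) := sub_nonneg.2 (hmono (by linarith))
    nlinarith [mul_le_mul_of_nonneg_left hlen hnn]
  have hlater : ∀ i : ℕ, h (A + (i + 1) + ρ) - h (A + (i + 1) - ρ) ≤
      3 * ρ * (h (A + (i + 1) - ρ) - h (A + i - ρ)) := fun i => by
    have := clampedRoot_add_sub_le (u := u) (v := v) (s := A + (i + 1)) (by linarith) hρ hρ₆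
      (by linarith [i.cast_nonneg (α := ℝ)])
    rwa [show (A : ℝ) + (i + 1) - 1 - ρ = A + i - ρ by ring] at this
  cases n with
  | zero => simpa using by nlinarith
  | succ n =>
    rw [Finset.sum_range_succ']
    have htel : ∑ i ∈ Finset.range n, (h (A + (i + 1 : ℕ) - ρ) - h (A + i - ρ)) ≤ v - u := by
      rw [Finset.sum_range_sub (fun i : ℕ => h (A + i - ρ))]
      linarith [clampedRoot_le (p := p) (u := u) (v := v) (A + n - ρ),
        le_clampedRoot (v := v) hp (by linarith) huv (A + (0 : ℕ) - ρ)]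
    have hsum := Finset.sum_le_sum fun i (_ : i ∈ Finset.range n) => hlater i
    rw [← Finset.mul_sum] at hsum
    push_cast at hsum htel ⊢
    rw [add_zero]
    nlinarith [mul_le_mul_of_nonneg_left htel (by linarith : 0 ≤ 3 * ρ)]

lemma exists_Icc_inter_nearInt_subset {p : ℕ} {u v : ℝ} (hp : p ≠ 0) (hu : 0 ≤ u) (ρ : ℝ) :
    ∃ n : ℕ, Icc u v ∩ nearInt p ρ ⊆ ⋃ i ∈ Finset.range n,
      Icc (clampedRoot p u v (⌈u ^ p - ρ⌉ + i - ρ)) (clampedRoot p u v (⌈u ^ p - ρ⌉ + i + ρ)) := by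
  refine ⟨(⌊v ^ p + ρ⌋ - ⌈u ^ p - ρ⌉ + 1).toNat, ?_⟩
  rintro x ⟨hx, m, hm⟩
  rw [abs_lt] at hm
  have hxp : x ^ p ∈ Icc (u ^ p) (v ^ p) :=
    ⟨pow_le_pow_left₀ hu hx.1 p, pow_le_pow_left₀ (hu.trans hx.1) hx.2 p⟩
  have hlo : ⌈u ^ p - ρ⌉ ≤ m := Int.ceil_le.2 (by linarith [hxp.1])
  have hhi : m ≤ ⌊v ^ p + ρ⌋ := Int.le_floor.2 (by linarith [hxp.2])
  have hi : ((⌈u ^ p - ρ⌉ : ℤ) : ℝ) + ((m - ⌈u ^ p - ρ⌉).toNat : ℕ) = m := by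
    rw [← Int.cast_natCast, Int.toNat_of_nonneg (by omega)]; push_cast; ring
  simp only [mem_iUnion, Finset.mem_range]
  refine ⟨(m - ⌈u ^ p - ρ⌉).toNat, by omega, ?_⟩
  rw [hi]
  exact mem_Icc_clampedRoot hp hu hx (by linarith) (by linarith)

theorem volume_Icc_inter_nearInt_le {p : ℕ} {u v ρ : ℝ} (hu : 1 ≤ u) (huv : u ≤ v)
    (hgap : 1 / 4 ≤ v ^ p - u ^ p) (hρ : 0 < ρ) (hρ₆ : 6 * ρ ≤ 1) :
    volume (Icc u v ∩ nearInt p ρ) ≤ ENNReal.ofReal (20 * ρ * (v - u)) := by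
  have hp : p ≠ 0 := by rintro rfl; norm_num at hgap
  obtain ⟨n, hcover⟩ := exists_Icc_inter_nearInt_subset (v := v) hp (by linarith : 0 ≤ u) ρ
  set A := ⌈u ^ p - ρ⌉
  set h := clampedRoot p u v
  calc volume (Icc u v ∩ nearInt p ρ)
      ≤ ∑ i ∈ Finset.range n, volume (Icc (h (A + i - ρ)) (h (A + i + ρ))) :=
        (measure_mono hcover).trans (measure_biUnion_finset_le _ _)
    _ = ENNReal.ofReal (∑ i ∈ Finset.range n, (h (A + i + ρ) - h (A + i - ρ))) := by
        rw [ENNReal.ofReal_sum_of_nonneg fun i _ =>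
          sub_nonneg.2 (clampedRoot_mono (by linarith) (by linarith))]
        simp only [Real.volume_Icc, h]
    _ ≤ ENNReal.ofReal (20 * ρ * (v - u)) := ENNReal.ofReal_le_ofReal <|
        sum_clampedRoot_sub_le hu huv hgap hρ hρ₆ (by linarith [Int.le_ceil (u ^ p - ρ)]) n

section Pieces

variable {η U V : ℝ}

def imagePiece (η U V : ℝ) (m : ℤ) : ℝ × ℝ := (max U (m + 3 * η), min V (m + 1 - 3 * η))

def imagePieces (η U V : ℝ) : Finset (ℝ × ℝ) :=
  ((Finset.Icc ⌊U⌋ ⌊V⌋).image (imagePiece η U V)).filter fun I => η ≤ I.2 - I.1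

lemma of_mem_imagePieces {I : ℝ × ℝ} (hI : I ∈ imagePieces η U V) :
    U ≤ I.1 ∧ I.2 ≤ V ∧ η ≤ I.2 - I.1 ∧ ∀ y ∈ Icc I.1 I.2, ∀ m : ℤ, 3 * η ≤ |y - m| := by
  obtain ⟨hI, hlen⟩ := Finset.mem_filter.1 hI
  obtain ⟨m, -, rfl⟩ := Finset.mem_image.1 hI
  refine ⟨le_max_left _ _, min_le_left _ _, hlen, fun y hy => le_abs_sub_intCast (m := m) ?_ ?_⟩
  · exact (le_max_right _ _).trans hy.1
  · exact hy.2.trans (min_le_right _ _)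

lemma imagePieces_pairwise (hη : 0 < η) :
    (imagePieces η U V : Set (ℝ × ℝ)).Pairwise fun I J => I.2 < J.1 ∨ J.2 < I.1 := by
  have hsep : ∀ m₁ m₂ : ℤ, m₁ < m₂ → (imagePiece η U V m₁).2 < (imagePiece η U V m₂).1 := by
    intro m₁ m₂ h
    have : (m₁ : ℝ) + 1 ≤ m₂ := by exact_mod_cast h
    exact (min_le_right _ _).trans_lt
      ((by linarith : (m₁ : ℝ) + 1 - 3 * η < m₂ + 3 * η).trans_le (le_max_right _ _))
  intro I hI J hJ hIJ
  simp only [imagePieces, Finset.coe_filter, Finset.mem_image, mem_ofPred_eq] at hI hJ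
  obtain ⟨⟨m₁, -, rfl⟩, -⟩ := hI
  obtain ⟨⟨m₂, -, rfl⟩, -⟩ := hJ
  rcases lt_trichotomy m₁ m₂ with h | rfl | h
  · exact Or.inl (hsep _ _ h)
  · exact absurd rfl hIJ
  · exact Or.inr (hsep _ _ h)

lemma exists_mem_imagePieces (hη₀ : 0 ≤ η) (hη : 7 * η ≤ 1) (hUV : η ≤ V - U) {t : ℝ}
    (ht : t ∈ Icc U V) (hfar : ∀ m : ℤ, 4 * η ≤ |t - m|) :
    ∃ I ∈ imagePieces η U V, t ∈ Icc I.1 I.2 := by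
  set m := ⌊t⌋
  have hlo : m + 4 * η ≤ t := by
    have := hfar m
    rw [abs_of_nonneg (sub_nonneg.2 (Int.floor_le t))] at this
    linarith
  have hhi : t ≤ m + 1 - 4 * η := by
    have := hfar (m + 1)
    rw [abs_of_neg (by push_cast; linarith [Int.lt_floor_add_one t])] at this
    push_cast at this
    linarith
  have := ht.1; have := ht.2
  refine ⟨imagePiece η U V m, Finset.mem_filter.2 ⟨Finset.mem_image.2 ⟨m, ?_, rfl⟩, ?_⟩,
    max_le ht.1 (by linarith), le_min ht.2 (by linarith)⟩
  · exact Finset.mem_Icc.2 ⟨Int.floor_mono ht.1, Int.floor_mono ht.2⟩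
  · rw [le_sub_iff_add_le', imagePiece, ← max_add_add_right]
    exact max_le (le_min (by linarith) (by linarith)) (le_min (by linarith) (by linarith))

end Pieces

def rootPair (p : ℕ) (I : ℝ × ℝ) : ℝ × ℝ := (I.1 ^ (p⁻¹ : ℝ), I.2 ^ (p⁻¹ : ℝ))

section RootPair

variable {p : ℕ} {η u v : ℝ} {I : ℝ × ℝ}

lemma mem_Icc_rootPair_iff (hp : p ≠ 0) (h₁ : 0 ≤ I.1) (h₂ : 0 ≤ I.2) {x : ℝ} (hx : 0 ≤ x) :
    x ∈ Icc (rootPair p I).1 (rootPair p I).2 ↔ x ^ p ∈ Icc I.1 I.2 :=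
  and_congr (rpow_inv_natCast_le_iff hp h₁ hx) (le_rpow_inv_natCast_iff hp h₂ hx)

lemma pow_mem_Icc_of_mem_Icc_rootPair (hp : p ≠ 0) (hη : 0 ≤ η) (hu : 0 ≤ u)
    (hI : I ∈ imagePieces η (u ^ p) (v ^ p)) {x : ℝ}
    (hx : x ∈ Icc (rootPair p I).1 (rootPair p I).2) : x ^ p ∈ Icc I.1 I.2 := by
  obtain ⟨hUI, -, hlen, -⟩ := of_mem_imagePieces hI
  have h₁ : 0 ≤ I.1 := (pow_nonneg hu p).trans hUI
  exact (mem_Icc_rootPair_iff hp h₁ (by linarith) ((Real.rpow_nonneg h₁ _).trans hx.1)).1 hx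

lemma rootPair_of_mem_imagePieces (hp : p ≠ 0) (hη : 0 ≤ η) (hu : 0 ≤ u) (huv : u ≤ v)
    (hI : I ∈ imagePieces η (u ^ p) (v ^ p)) :
    u ≤ (rootPair p I).1 ∧ (rootPair p I).1 ≤ (rootPair p I).2 ∧ (rootPair p I).2 ≤ v ∧
      η ≤ (rootPair p I).2 ^ p - (rootPair p I).1 ^ p ∧
      ∀ x ∈ Icc (rootPair p I).1 (rootPair p I).2, ∀ m : ℤ, 3 * η ≤ |x ^ p - m| := by
  obtain ⟨hUI, hIV, hlen, hfar⟩ := of_mem_imagePieces hI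
  have h₁ : 0 ≤ I.1 := (pow_nonneg hu p).trans hUI
  have h₂ : 0 ≤ I.2 := by linarith
  refine ⟨(le_rpow_inv_natCast_iff hp h₁ hu).2 hUI,
    Real.rpow_le_rpow h₁ (by linarith : I.1 ≤ I.2) (by positivity),
    (rpow_inv_natCast_le_iff hp h₂ (hu.trans huv)).2 hIV, ?_,
    fun x hx m => hfar _ (pow_mem_Icc_of_mem_Icc_rootPair hp hη hu hI hx) m⟩
  rwa [rootPair, Real.rpow_inv_natCast_pow h₁ hp, Real.rpow_inv_natCast_pow h₂ hp]

lemma disjoint_Icc_rootPair (hp : p ≠ 0) (hη : 0 < η) (hu : 0 ≤ u) {J : ℝ × ℝ}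
    (hI : I ∈ imagePieces η (u ^ p) (v ^ p)) (hJ : J ∈ imagePieces η (u ^ p) (v ^ p))
    (hIJ : I ≠ J) :
    Disjoint (Icc (rootPair p I).1 (rootPair p I).2) (Icc (rootPair p J).1 (rootPair p J).2) := by
  refine Set.disjoint_left.2 fun x hxI hxJ => ?_
  have h₁ := pow_mem_Icc_of_mem_Icc_rootPair hp hη.le hu hI hxI
  have h₂ := pow_mem_Icc_of_mem_Icc_rootPair hp hη.le hu hJ hxJ
  rcases imagePieces_pairwise hη hI hJ hIJ with h | h
  · linarith [h₁.2, h₂.1]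
  · linarith [h₁.1, h₂.2]

end RootPair

def children (η : ℝ) (p : ℕ) (F : Finset (ℝ × ℝ)) : Finset (ℝ × ℝ) :=
  F.biUnion fun P => (imagePieces η (P.1 ^ p) (P.2 ^ p)).image (rootPair p)

def carrier (F : Finset (ℝ × ℝ)) : Set ℝ := ⋃ P ∈ F, Icc P.1 P.2

structure IsGood (a η : ℝ) (n : ℕ) (F : Finset (ℝ × ℝ)) : Prop where
  one_add_le : ∀ P ∈ F, 1 + a ≤ P.1
  fst_le_snd : ∀ P ∈ F, P.1 ≤ P.2
  le_gap : ∀ P ∈ F, η ≤ P.2 ^ n - P.1 ^ n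
  pairwiseDisjoint : (F : Set (ℝ × ℝ)).PairwiseDisjoint fun P => Icc P.1 P.2

section Children

variable {a η : ℝ} {n p : ℕ} {F : Finset (ℝ × ℝ)}

lemma mem_children {Q : ℝ × ℝ} :
    Q ∈ children η p F ↔ ∃ P ∈ F, ∃ I ∈ imagePieces η (P.1 ^ p) (P.2 ^ p), rootPair p I = Q := by
  simp [children]

lemma IsGood.exists_of_mem_children (hF : IsGood a η n F) (ha : 0 ≤ a) (hη : 0 ≤ η)
    (hp : p ≠ 0) {Q : ℝ × ℝ} (hQ : Q ∈ children η p F) :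
    ∃ P ∈ F, P.1 ≤ Q.1 ∧ Q.1 ≤ Q.2 ∧ Q.2 ≤ P.2 ∧ η ≤ Q.2 ^ p - Q.1 ^ p ∧
      ∀ x ∈ Icc Q.1 Q.2, ∀ m : ℤ, 3 * η ≤ |x ^ p - m| := by
  obtain ⟨P, hP, I, hI, rfl⟩ := mem_children.1 hQ
  exact ⟨P, hP, rootPair_of_mem_imagePieces hp hη (by linarith [hF.one_add_le P hP])
    (hF.fst_le_snd P hP) hI⟩

lemma IsGood.carrier_children_subset (hF : IsGood a η n F) (ha : 0 ≤ a) (hη : 0 ≤ η)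
    (hp : p ≠ 0) : carrier (children η p F) ⊆ carrier F := by
  simp only [carrier, iUnion_subset_iff]
  intro Q hQ x hx
  obtain ⟨P, hP, h₁, -, h₂, -⟩ := hF.exists_of_mem_children ha hη hp hQ
  exact mem_biUnion hP ⟨h₁.trans hx.1, hx.2.trans h₂⟩

lemma IsGood.le_abs_pow_sub_intCast (hF : IsGood a η n F) (ha : 0 ≤ a) (hη : 0 ≤ η)
    (hp : p ≠ 0) {x : ℝ} (hx : x ∈ carrier (children η p F)) (m : ℤ) :
    3 * η ≤ |x ^ p - m| := by
  simp only [carrier, mem_iUnion] at hx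
  obtain ⟨Q, hQ, hxQ⟩ := hx
  obtain ⟨P, -, -, -, -, -, hfar⟩ := hF.exists_of_mem_children ha hη hp hQ
  exact hfar x hxQ m

lemma isGood_children (hF : IsGood a η n F) (ha : 0 ≤ a) (hη : 0 < η) :
    IsGood a η (n + 1) (children η (n + 1) F) := by
  have hchild := fun Q (hQ : Q ∈ children η (n + 1) F) =>
    hF.exists_of_mem_children ha hη.le n.succ_ne_zero hQ
  refine ⟨fun Q hQ => ?_, fun Q hQ => ?_, fun Q hQ => ?_, ?_⟩
  · obtain ⟨P, hP, h, -⟩ := hchild Q hQ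
    exact (hF.one_add_le P hP).trans h
  · obtain ⟨P, -, -, h, -⟩ := hchild Q hQ
    exact h
  · obtain ⟨P, -, -, -, -, h, -⟩ := hchild Q hQ
    exact h
  intro Q₁ hQ₁ Q₂ hQ₂ hne
  obtain ⟨P₁, hP₁, I₁, hI₁, rfl⟩ := mem_children.1 hQ₁
  obtain ⟨P₂, hP₂, I₂, hI₂, rfl⟩ := mem_children.1 hQ₂
  have hu : ∀ P ∈ F, 0 ≤ P.1 := fun P hP => by linarith [hF.one_add_le P hP]
  by_cases hP : P₁ = P₂
  · subst hP
    exact disjoint_Icc_rootPair n.succ_ne_zero hη (hu P₁ hP₁) hI₁ hI₂ fun h => hne (h ▸ rfl)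
  · have hsub : ∀ P ∈ F, ∀ I ∈ imagePieces η (P.1 ^ (n + 1)) (P.2 ^ (n + 1)),
        Icc (rootPair (n + 1) I).1 (rootPair (n + 1) I).2 ⊆ Icc P.1 P.2 := fun P hP I hI => by
      obtain ⟨h₁, -, h₂, -⟩ := rootPair_of_mem_imagePieces n.succ_ne_zero hη.le (hu P hP)
        (hF.fst_le_snd P hP) hI
      exact Icc_subset_Icc h₁ h₂
    exact (hF.pairwiseDisjoint hP₁ hP₂ hP).mono (hsub P₁ hP₁ I₁ hI₁) (hsub P₂ hP₂ I₂ hI₂)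

lemma IsGood.carrier_subset_union (hF : IsGood a η n F) (ha : 0 ≤ a) (hη : 0 ≤ η)
    (hη₇ : 7 * η ≤ 1) :
    carrier F ⊆ carrier (children η (n + 1) F) ∪ nearInt (n + 1) (4 * η) := by
  intro x hx
  simp only [carrier, mem_iUnion] at hx
  obtain ⟨P, hP, hxP⟩ := hx
  by_cases hnear : x ∈ nearInt (n + 1) (4 * η)
  · exact Or.inr hnear
  refine Or.inl ?_
  simp only [nearInt, mem_ofPred_eq, not_exists, not_lt] at hnear
  have hu : 1 ≤ P.1 := by linarith [hF.one_add_le P hP]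
  have hx₀ : 0 ≤ x := by linarith [hxP.1]
  have hlen : η ≤ P.2 ^ (n + 1) - P.1 ^ (n + 1) := by
    have := pow_mul_pow_sub_pow_le hu (hF.fst_le_snd P hP) n 1
    nlinarith [hF.le_gap P hP, sub_nonneg.2 (pow_le_pow_left₀ (by linarith) (hF.fst_le_snd P hP) n)]
  obtain ⟨I, hI, hxI⟩ := exists_mem_imagePieces hη hη₇ hlen
    ⟨pow_le_pow_left₀ (by linarith) hxP.1 _, pow_le_pow_left₀ hx₀ hxP.2 _⟩ hnear
  obtain ⟨hUI, -, hIlen, -⟩ := of_mem_imagePieces hI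
  have h₁ : 0 ≤ I.1 := (pow_nonneg (by linarith) _).trans hUI
  simp only [carrier, mem_iUnion]
  exact ⟨rootPair (n + 1) I, mem_children.2 ⟨P, hP, I, hI, rfl⟩,
    (mem_Icc_rootPair_iff n.succ_ne_zero h₁ (by linarith) hx₀).2 hxI⟩

end Children

lemma volume_carrier {F : Finset (ℝ × ℝ)}
    (hF : (F : Set (ℝ × ℝ)).PairwiseDisjoint fun P => Icc P.1 P.2) :
    volume (carrier F) = ∑ P ∈ F, ENNReal.ofReal (P.2 - P.1) := by
  rw [carrier, measure_biUnion_finset hF fun _ _ => measurableSet_Icc]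
  simp only [Real.volume_Icc]

lemma volume_carrier_inter_nearInt_le {a η ρ : ℝ} {j p : ℕ} {Y : Finset (ℝ × ℝ)}
    (hY : IsGood a η j Y) (ha : 0 ≤ a) (hρ : 0 < ρ) (hρ₆ : 6 * ρ ≤ 1)
    (hgap : ∀ E ∈ Y, 1 / 4 ≤ E.2 ^ p - E.1 ^ p) :
    volume (carrier Y ∩ nearInt p ρ) ≤ ENNReal.ofReal (20 * ρ) * volume (carrier Y) := by
  rw [volume_carrier hY.pairwiseDisjoint, Finset.mul_sum, carrier, iUnion₂_inter]
  refine (measure_biUnion_finset_le _ _).trans (Finset.sum_le_sum fun E hE => ?_)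
  rw [← ENNReal.ofReal_mul (by positivity)]
  exact volume_Icc_inter_nearInt_le (by linarith [hY.one_add_le E hE]) (hY.fst_le_snd E hE)
    (hgap E hE) hρ hρ₆

def generation (a η : ℝ) (N₀ : ℕ) : ℕ → Finset (ℝ × ℝ)
  | 0 => {(1 + a, 1 + 2 * a)}
  | i + 1 => children η (N₀ + i + 1) (generation a η N₀ i)

section Generation

variable {a η : ℝ} {N₀ : ℕ}

lemma isGood_generation (ha : 0 ≤ a) (hη : 0 < η)
    (hinit : η ≤ (1 + 2 * a) ^ N₀ - (1 + a) ^ N₀) :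
    ∀ i, IsGood a η (N₀ + i) (generation a η N₀ i)
  | 0 => ⟨by simp [generation], by simp [generation]; linarith,
      by simpa [generation] using hinit, by simp [generation]⟩
  | i + 1 => isGood_children (isGood_generation ha hη hinit i) ha hη

lemma carrier_generation_zero : carrier (generation a η N₀ 0) = Icc (1 + a) (1 + 2 * a) := by
  simp [carrier, generation]

lemma antitone_carrier_generation (ha : 0 ≤ a) (hη : 0 < η)
    (hinit : η ≤ (1 + 2 * a) ^ N₀ - (1 + a) ^ N₀) :
    Antitone fun i => carrier (generation a η N₀ i) :=
  antitone_nat_of_succ_le fun i =>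
    (isGood_generation ha hη hinit i).carrier_children_subset ha hη.le (by omega)

lemma one_div_four_le_gap_generation (ha : 0 ≤ a) (hη : 0 < η) (hη₄ : 4 * η ≤ 1)
    (hinit : 1 / 4 ≤ (1 + 2 * a) ^ N₀ - (1 + a) ^ N₀) {M : ℕ} (hM : 1 ≤ 4 * ((1 + a) ^ M * η))
    (i : ℕ) :
    ∀ E ∈ generation a η N₀ (i + 1 - M), 1 / 4 ≤ E.2 ^ (N₀ + i + 1) - E.1 ^ (N₀ + i + 1) := by
  intro E hE
  rcases lt_or_ge (i + 1) M with h | h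
  · rw [Nat.sub_eq_zero_of_le h.le] at hE
    obtain rfl : E = (1 + a, 1 + 2 * a) := by simpa [generation] using hE
    have hgrow := pow_mul_pow_sub_pow_le (u := 1 + a) (v := 1 + 2 * a) (by linarith) (by linarith)
      N₀ (i + 1)
    have hone : 1 ≤ (1 + a) ^ (i + 1) := one_le_pow₀ (by linarith)
    show 1 / 4 ≤ (1 + 2 * a) ^ (N₀ + (i + 1)) - (1 + a) ^ (N₀ + (i + 1))
    nlinarith
  · have hG := isGood_generation ha hη (by linarith) (i + 1 - M)
    have hu := hG.one_add_le E hE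
    have hgrow := pow_mul_pow_sub_pow_le (by linarith) (hG.fst_le_snd E hE) (N₀ + (i + 1 - M)) M
    rw [show N₀ + (i + 1 - M) + M = N₀ + i + 1 by omega] at hgrow
    have hpow : (1 + a) ^ M ≤ E.1 ^ M := pow_le_pow_left₀ (by linarith) hu M
    nlinarith [hG.le_gap E hE, pow_nonneg (by linarith : (0 : ℝ) ≤ 1 + a) M]

lemma volume_carrier_generation_le (ha : 0 ≤ a) (hη : 0 < η) (hη₂₄ : 24 * η ≤ 1)
    (hinit : 1 / 4 ≤ (1 + 2 * a) ^ N₀ - (1 + a) ^ N₀) {M : ℕ} (hM : 1 ≤ 4 * ((1 + a) ^ M * η))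
    (i : ℕ) :
    volume (carrier (generation a η N₀ i)) ≤ volume (carrier (generation a η N₀ (i + 1))) +
      ENNReal.ofReal (80 * η) * volume (carrier (generation a η N₀ (i + 1 - M))) := by
  have hinit' : η ≤ (1 + 2 * a) ^ N₀ - (1 + a) ^ N₀ := by linarith
  have hM₀ : M ≠ 0 := by rintro rfl; norm_num at hM; linarith
  have hFY : carrier (generation a η N₀ i) ⊆ carrier (generation a η N₀ (i + 1 - M)) :=
    antitone_carrier_generation ha hη hinit' (by omega)
  have hsub : carrier (generation a η N₀ i) ⊆ carrier (generation a η N₀ (i + 1)) ∪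
      (carrier (generation a η N₀ (i + 1 - M)) ∩ nearInt (N₀ + i + 1) (4 * η)) := fun x hx =>
    ((isGood_generation ha hη hinit' i).carrier_subset_union ha hη.le (by linarith) hx).imp_right
      fun h => ⟨hFY hx, h⟩
  have hloss := volume_carrier_inter_nearInt_le (isGood_generation ha hη hinit' (i + 1 - M)) ha
    (by linarith : 0 < 4 * η) (by linarith)
    (one_div_four_le_gap_generation ha hη (by linarith) hinit hM i)
  rw [show 20 * (4 * η) = 80 * η by ring] at hloss
  exact (measure_mono hsub).trans ((measure_union_le _ _).trans (add_le_add_right hloss _))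

lemma nonempty_iInter_carrier_generation (ha : 0 < a) (hη : 0 < η) (hη₂₄ : 24 * η ≤ 1)
    (hinit : 1 / 4 ≤ (1 + 2 * a) ^ N₀ - (1 + a) ^ N₀) {M : ℕ} (hM : 1 ≤ 4 * ((1 + a) ^ M * η))
    (hMη : 640 * (M * η) ≤ 1) : (⋂ i, carrier (generation a η N₀ i)).Nonempty := by
  have hanti := antitone_carrier_generation ha.le hη (by linarith)
  have hsub₀ : ∀ i, carrier (generation a η N₀ i) ⊆ Icc (1 + a) (1 + 2 * a) := fun i => by
    simpa only [carrier_generation_zero] using hanti (Nat.zero_le i)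
  have hfin : ∀ i, volume (carrier (generation a η N₀ i)) ≠ ⊤ := fun i =>
    measure_ne_top_of_subset (hsub₀ i) measure_Icc_lt_top.ne
  set r := fun i => (volume (carrier (generation a η N₀ i))).toReal
  have hr : Antitone r := fun i j hij => ENNReal.toReal_mono (hfin i) (measure_mono (hanti hij))
  have hr₀ : 0 < r 0 := by
    simp only [r, carrier_generation_zero, Real.volume_Icc]
    rw [ENNReal.toReal_ofReal (by linarith)]
    linarith
  have hstep : ∀ i, r i ≤ r (i + 1) + 80 * η * r (i + 1 - M) := fun i => by
    have h := ENNReal.toReal_mono (by finiteness [hfin (i + 1), hfin (i + 1 - M)])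
      (volume_carrier_generation_le ha.le hη hη₂₄ hinit hM i)
    rwa [ENNReal.toReal_add (hfin _) (by finiteness [hfin (i + 1 - M)]), ENNReal.toReal_mul,
      ENNReal.toReal_ofReal (by linarith)] at h
  have hM₀ : 0 < M := Nat.pos_of_ne_zero (by rintro rfl; norm_num at hM; linarith)
  have hpos := pos_of_le_add_mul_delay hr (fun _ => ENNReal.toReal_nonneg) hr₀ (by linarith) hM₀
    (by linarith) hstep
  have hclosed : ∀ i, IsClosed (carrier (generation a η N₀ i)) := fun i =>
    (Finset.finite_toSet _).isClosed_biUnion fun _ _ => isClosed_Icc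
  refine IsCompact.nonempty_iInter_of_sequence_nonempty_isCompact_isClosed _
    (fun i => hanti (Nat.le_succ i))
    (fun i => nonempty_of_measure_ne_zero (μ := volume) fun h => by simpa [r, h] using hpos i)
    (isCompact_Icc.of_isClosed_subset (hclosed 0) (hsub₀ 0)) hclosed

end Generation

theorem exists_forall_le_abs_pow_sub_intCast {a η : ℝ} {N₀ M : ℕ} (ha : 0 < a) (hη : 0 < η)
    (hηa : 3 * η ≤ a) (hη₂₄ : 24 * η ≤ 1) (hsmall : (1 + 2 * a) ^ N₀ ≤ 2 - 3 * η)
    (hinit : 1 / 4 ≤ (1 + 2 * a) ^ N₀ - (1 + a) ^ N₀) (hM : 1 ≤ 4 * ((1 + a) ^ M * η))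
    (hMη : 640 * (M * η) ≤ 1) :
    ∃ x ∈ Icc (1 + a) (1 + 2 * a), ∀ n : ℕ, 0 < n → ∀ m : ℤ, 3 * η ≤ |x ^ n - m| := by
  obtain ⟨x, hx⟩ := nonempty_iInter_carrier_generation ha hη hη₂₄ hinit hM hMη
  rw [mem_iInter] at hx
  have hx₀ : x ∈ Icc (1 + a) (1 + 2 * a) := carrier_generation_zero (η := η) (N₀ := N₀) ▸ hx 0
  refine ⟨x, hx₀, fun n hn m => ?_⟩
  rcases le_or_gt n N₀ with h | h
  · -- small exponents: `x ^ n` stays inside `[1 + 3η, 2 - 3η]`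
    have h₁ : 1 + a ≤ x ^ n := hx₀.1.trans (le_self_pow₀ (by linarith [hx₀.1]) hn.ne')
    have h₂ : x ^ n ≤ (1 + 2 * a) ^ N₀ :=
      (pow_le_pow_left₀ (by linarith [hx₀.1]) hx₀.2 n).trans (pow_le_pow_right₀ (by linarith) h)
    exact le_abs_sub_intCast (m := 1) (by push_cast; linarith) (by push_cast; linarith) m
  · obtain ⟨i, rfl⟩ : ∃ i, n = N₀ + i + 1 := ⟨n - N₀ - 1, by omega⟩
    exact (isGood_generation ha.le hη (by linarith) i).le_abs_pow_sub_intCast ha.le hη.le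
      (by omega) (hx (i + 1)) m

def scale (k : ℕ) : ℝ := (1 / 2) ^ k

def margin (k : ℕ) : ℝ := scale k / (2 ^ 15 * k)

lemma scale_pos (k : ℕ) : 0 < scale k := by unfold scale; positivity

lemma margin_pos {k : ℕ} (hk : 0 < k) : 0 < margin k := by
  unfold margin; have := scale_pos k; positivity

lemma scale_mul_two_pow {k j : ℕ} (hjk : j ≤ k) : scale k * 2 ^ j = (1 / 2) ^ (k - j) := by
  obtain ⟨i, rfl⟩ := Nat.exists_eq_add_of_le hjk
  rw [scale, Nat.add_sub_cancel_left, pow_add, mul_right_comm, ← mul_pow]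
  norm_num

lemma two_pow_mul_margin_le_scale {k : ℕ} (hk : 0 < k) : 2 ^ 15 * margin k ≤ scale k := by
  have : (1 : ℝ) ≤ k := by exact_mod_cast hk
  have := scale_pos k
  rw [margin, mul_div_assoc', div_le_iff₀ (by positivity)]
  nlinarith

lemma one_add_two_mul_scale_pow_le {k : ℕ} (hk : 2 ≤ k) :
    (1 + 2 * scale k) ^ 2 ^ (k - 2) ≤ 17 / 10 := by
  have hN : 2 * scale k * (2 ^ (k - 2) : ℕ) = 1 / 2 := by
    push_cast
    rw [mul_assoc, scale_mul_two_pow (Nat.sub_le k 2), Nat.sub_sub_self hk]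
    norm_num
  calc (1 + 2 * scale k) ^ 2 ^ (k - 2) ≤ Real.exp (2 * scale k) ^ 2 ^ (k - 2) := by
        gcongr
        · have := scale_pos k; positivity
        · linarith [Real.add_one_le_exp (2 * scale k)]
    _ = Real.exp (1 / 2) := by rw [← Real.exp_nat_mul, mul_comm, hN]
    _ ≤ 17 / 10 := by
        have h := Real.exp_one_lt_d9
        rw [show (1 : ℝ) = 1 / 2 + 1 / 2 by norm_num, Real.exp_add] at h
        nlinarith [Real.exp_pos (1 / 2)]

lemma one_div_four_le_gap {k : ℕ} (hk : 2 ≤ k) :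
    1 / 4 ≤ (1 + 2 * scale k) ^ 2 ^ (k - 2) - (1 + scale k) ^ 2 ^ (k - 2) := by
  have ha := scale_pos k
  have hmv := natCast_mul_pow_mul_sub_le_pow_sub_pow (by linarith : 0 ≤ 1 + scale k)
    (by linarith : 1 + scale k ≤ 1 + 2 * scale k) (2 ^ (k - 2))
  have hN : scale k * (2 ^ (k - 2) : ℕ) = 1 / 4 := by
    push_cast
    rw [scale_mul_two_pow (Nat.sub_le k 2), Nat.sub_sub_self hk]
    norm_num
  have hone : 1 ≤ (1 + scale k) ^ (2 ^ (k - 2) - 1) := one_le_pow₀ (by linarith)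
  nlinarith

lemma one_le_four_mul_pow_mul_margin {k : ℕ} (hk : 0 < k) :
    1 ≤ 4 * ((1 + scale k) ^ ((2 * k + 14) * 2 ^ k) * margin k) := by
  have ha := scale_pos k
  have hdouble : 2 ≤ (1 + scale k) ^ 2 ^ k := by
    have := one_add_mul_le_pow (by linarith : (-2 : ℝ) ≤ scale k) (2 ^ k)
    push_cast at this
    rw [mul_comm, scale_mul_two_pow le_rfl, Nat.sub_self, pow_zero] at this
    linarith
  have hk' : (k : ℝ) ≤ 2 ^ k := by exact_mod_cast Nat.lt_two_pow_self.le
  have hkpos : (0 : ℝ) < k := by exact_mod_cast hk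
  calc (1 : ℝ) ≤ 4 * (2 ^ (2 * k + 14) * margin k) := by
        have : 4 * (2 ^ (2 * k + 14) * margin k) = 2 * 2 ^ k / k := by
          rw [margin, scale, one_div_pow]
          field_simp
          ring
        rw [this, le_div_iff₀ hkpos]
        linarith
    _ ≤ 4 * ((1 + scale k) ^ ((2 * k + 14) * 2 ^ k) * margin k) := by
        have := margin_pos hk
        rw [mul_comm _ (2 ^ k), pow_mul]
        gcongr

lemma mul_margin_le {k : ℕ} (hk : 0 < k) : 640 * (((2 * k + 14) * 2 ^ k : ℕ) * margin k) ≤ 1 := by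
  have hkR : (1 : ℝ) ≤ k := by exact_mod_cast hk
  have : (((2 * k + 14) * 2 ^ k : ℕ) : ℝ) * margin k = (2 * k + 14) / (2 ^ 15 * k) := by
    rw [margin, scale, one_div_pow]
    push_cast
    field_simp
  rw [this, mul_div_assoc', div_le_one (by positivity)]
  linarith

lemma div_abs_log_lt {k : ℕ} (hk : 2 ≤ k) {ε : ℝ} (h₁ : scale k ≤ ε) (h₂ : ε ≤ 2 * scale k) :
    2 ^ (-17 : ℤ) * ε / |Real.log ε| < 3 * margin k := by
  have ha := scale_pos k
  have hm := margin_pos (by omega : 0 < k)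
  have hkR : (2 : ℝ) ≤ k := by exact_mod_cast hk
  have hlog2 := Real.log_two_gt_d9
  have hε : 0 < ε := by linarith
  have hlog : (k - 1) * Real.log 2 ≤ -Real.log ε := by
    have := Real.log_le_log hε h₂
    rw [scale, Real.log_mul two_ne_zero (by positivity), Real.log_pow, one_div,
      Real.log_inv] at this
    linarith
  have hscale : scale k = 2 ^ 15 * k * margin k := by
    rw [margin]; field_simp
  rw [abs_of_neg (by nlinarith), div_lt_iff₀ (by nlinarith), zpow_neg]
  have hgain : 0 < margin k * (6 * (k - 1) * Real.log 2 - k) := mul_pos hm (by nlinarith)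
  nlinarith [mul_le_mul_of_nonneg_left hlog (by positivity : (0 : ℝ) ≤ 3 * margin k)]

lemma exists_forall_le_abs_pow_sub_intCast_of_two_le {k : ℕ} (hk : 2 ≤ k) :
    ∃ x ∈ Icc (1 + scale k) (1 + 2 * scale k),
      ∀ n : ℕ, 0 < n → ∀ m : ℤ, 3 * margin k ≤ |x ^ n - m| := by
  have ha := scale_pos k
  have hηa := two_pow_mul_margin_le_scale (by omega : 0 < k)
  have ha₄ : scale k ≤ 1 / 4 :=
    (pow_le_pow_of_le_one (by norm_num) (by norm_num) hk).trans (by norm_num)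
  exact exists_forall_le_abs_pow_sub_intCast ha (margin_pos (by omega)) (by linarith)
    (by linarith) (by linarith [one_add_two_mul_scale_pow_le hk]) (one_div_four_le_gap hk)
    (one_le_four_mul_pow_mul_margin (by omega)) (mul_margin_le (by omega))

end PowersAvoidingIntegers

end

theorem stmt_3 :
    ∀ δ : ℝ, 0 < δ → ∃ ε : ℝ, 0 < ε ∧ ε < δ ∧
      ∀ n : ℕ, 0 < n → ∀ m : ℤ,
        2 ^ (-17 : ℤ) * ε / |Real.log ε| < |(1 + ε) ^ n - (m : ℝ)| := by
  intro δ hδ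
  obtain ⟨k₀, hk₀⟩ := exists_pow_lt_of_lt_one (half_pos hδ) (by norm_num : (1 / 2 : ℝ) < 1)
  set k := max k₀ 2
  have hk : 2 ≤ k := le_max_right _ _
  have ha := PowersAvoidingIntegers.scale_pos k
  have hkδ : 2 * PowersAvoidingIntegers.scale k < δ := by
    have : PowersAvoidingIntegers.scale k ≤ (1 / 2) ^ k₀ :=
      pow_le_pow_of_le_one (by norm_num) (by norm_num) (le_max_left _ _)
    linarith
  obtain ⟨x, ⟨hx₁, hx₂⟩, hfar⟩ :=
    PowersAvoidingIntegers.exists_forall_le_abs_pow_sub_intCast_of_two_le hk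
  refine ⟨x - 1, by linarith, by linarith, fun n hn m => ?_⟩
  rw [add_sub_cancel]
  exact (PowersAvoidingIntegers.div_abs_log_lt hk (by linarith) (by linarith)).trans_le
    (hfar n hn m)
end

section
/- Let ξ > 0 be real, let 0 < ε < 1, and let (a_n)_{n≥1} be a sequence of reals with 0 ≤ a_n < 1 − ε for all n ≥ 1. Then the set of real numbers α > 1 such that a_n ≤ {ξ α^n} ≤ a_n + ε for every n ≥ 1 has Hausdorff dimension 1. -/
/-!
Fix `r < 1` and a large `T`. Since `ξ α ^ (n + 1) - ξ β ^ (n + 1) ≥ T (ξ α ^ n - ξ β ^ n)` for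
`α ≥ β ≥ T`, a window of length `ε` for `ξ α ^ n` lets `ξ α ^ (n + 1)` sweep an interval of length
at least `ε T`, which contains `M ≈ ε T` admissible windows of the next level. Digit sequences in
`Fin M` thus code points of the set, nested-interval style, and two codes first differing at `n`
give points at distance `≳ (2R)⁻ⁿ`, where `R = T + 2 / ξ` bounds the construction. As
`M ≥ (2R) ^ r` for large `T`, decoding followed by base-`M` expansion is an `r`-Hölder map onto
`[0, 1]`, so the set has dimension at least `r`.
-/

open MeasureTheory Set Filter Asymptotics PiNat
open scoped NNReal ENNReal

lemma abs_ofDigits_sub_ofDigits_le_of_separation {X : Type*} [MetricSpace X] {M : ℕ}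
    {f : (ℕ → Fin M) → X} {δ B r : ℝ} (hδ : 0 < δ) (hB : 0 < B) (hr : 0 < r) (hBM : B ^ r ≤ M)
    (hf : ∀ c c', c ≠ c' → δ / B ^ firstDiff c c' ≤ dist (f c) (f c')) (c c' : ℕ → Fin M) :
    |Real.ofDigits c - Real.ofDigits c'| ≤ (δ ^ r)⁻¹ * dist (f c) (f c') ^ r := by
  rcases eq_or_ne c c' with rfl | hne
  · simp [hr.ne']
  set n := firstDiff c c'
  calc |Real.ofDigits c - Real.ofDigits c'| ≤ ((M : ℝ) ^ n)⁻¹ :=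
        Real.abs_ofDigits_sub_ofDigits_le fun _ => apply_eq_of_lt_firstDiff
    _ ≤ ((B ^ n) ^ r)⁻¹ := by
        gcongr
        rw [← Real.rpow_pow_comm hB.le]
        gcongr
    _ = (δ ^ r)⁻¹ * (δ / B ^ n) ^ r := by
        rw [Real.div_rpow hδ.le (by positivity)]
        field_simp
    _ ≤ (δ ^ r)⁻¹ * dist (f c) (f c') ^ r := by
        gcongr
        exact hf c c' hne

theorem le_dimH_range_of_separation {X : Type*} [MetricSpace X] {M : ℕ} (hM : 1 < M)
    {f : (ℕ → Fin M) → X} {δ B : ℝ} (hδ : 0 < δ) (hB : 0 < B) {r : ℝ≥0} (hr : 0 < r)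
    (hBM : B ^ (r : ℝ) ≤ M)
    (hf : ∀ c c', c ≠ c' → δ / B ^ firstDiff c c' ≤ dist (f c) (f c')) :
    (r : ℝ≥0∞) ≤ dimH (range f) := by
  have : NeZero M := ⟨by omega⟩
  have hinj : f.Injective := fun c c' hcc' => by
    by_contra hne
    have := hf c c' hne
    rw [hcc', dist_self] at this
    exact this.not_gt (by positivity)
  set g : X → ℝ := fun x => Real.ofDigits (Function.invFun f x)
  have hg : ∀ c, g (f c) = Real.ofDigits c := fun c =>
    congrArg Real.ofDigits (Function.leftInverse_invFun hinj c)
  have hholder : HolderOnWith (δ.toNNReal ^ (r : ℝ))⁻¹ r g (range f) := by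
    rintro _ ⟨c, rfl⟩ _ ⟨c', rfl⟩
    rw [edist_nndist, edist_nndist, ← ENNReal.coe_rpow_of_nonneg _ r.coe_nonneg, ← ENNReal.coe_mul,
      ENNReal.coe_le_coe, ← NNReal.coe_le_coe]
    push_cast
    rw [hg, hg, Real.coe_toNNReal _ hδ.le, Real.dist_eq]
    exact abs_ofDigits_sub_ofDigits_le_of_separation hδ hB (NNReal.coe_pos.2 hr) hBM hf c c'
  have hunit : dimH (Icc (0 : ℝ) 1) ≤ dimH (range f) / r := by
    refine (dimH_mono fun x hx => ?_).trans (hholder.dimH_image_le hr)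
    obtain ⟨c, -, rfl⟩ := Real.ofDigits_SurjOn hM hx
    exact ⟨f c, mem_range_self c, hg c⟩
  rw [Real.dimH_of_mem_nhds (Icc_mem_nhds (by norm_num : (0 : ℝ) < 1 / 2) (by norm_num)),
    Module.finrank_self, Nat.cast_one, ENNReal.le_div_iff_mul_le (by simp [hr.ne']) (by simp),
    one_mul] at hunit
  exact hunit

lemma isLittleO_rpow_id_atTop {r : ℝ} (hr : r < 1) : (fun x : ℝ => x ^ r) =o[atTop] id := by
  refine (isLittleO_iff_tendsto' ?_).2 ?_
  · filter_upwards [eventually_gt_atTop 0] with x hx h using absurd h hx.ne'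
  · refine (tendsto_rpow_neg_atTop (sub_pos.2 hr)).congr' ?_
    filter_upwards [eventually_gt_atTop 0] with x hx
    rw [id, ← Real.rpow_sub_one hx.ne', neg_sub]

lemma eventually_rpow_add_le_mul {r : ℝ} (hr : r < 1) {ε : ℝ} (hε : 0 < ε) {b : ℝ} (hb : 0 < b)
    (c d : ℝ) : ∀ᶠ x in atTop, (b * x + c) ^ r + d ≤ ε * x := by
  have hlin : (fun x : ℝ => b * x + c) =O[atTop] id :=
    ((isBigO_refl id atTop).const_mul_left b).add (isLittleO_const_id_atTop c).isBigO
  have hsmall : (fun x : ℝ => (b * x + c) ^ r + d) =o[atTop] id :=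
    (((isLittleO_rpow_id_atTop hr).comp_tendsto
      (tendsto_atTop_add_const_right _ c (tendsto_id.const_mul_atTop hb))).trans_isBigO hlin).add
      (isLittleO_const_id_atTop d)
  filter_upwards [hsmall.bound hε, eventually_ge_atTop 0] with x hx hx0
  rw [Real.norm_eq_abs, Real.norm_eq_abs, id, abs_of_nonneg hx0] at hx
  exact (le_abs_self _).trans hx

namespace FractPowCantor

variable {ξ ε : ℝ} {a : ℕ → ℝ} {T : ℝ} {M : ℕ}

noncomputable def root (ξ : ℝ) (n : ℕ) (y : ℝ) : ℝ := (y / ξ) ^ ((n + 1 : ℝ)⁻¹)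

section root

variable (hξ : 0 < ξ) {n : ℕ} {x y : ℝ}
include hξ

lemma root_nonneg (hy : 0 ≤ y) : 0 ≤ root ξ n y :=
  Real.rpow_nonneg (div_nonneg hy hξ.le) _

lemma mul_root_pow (hy : 0 ≤ y) : ξ * root ξ n y ^ (n + 1) = y := by
  rw [root, ← Nat.cast_succ, Real.rpow_inv_natCast_pow (div_nonneg hy hξ.le) n.succ_ne_zero,
    mul_div_cancel₀ _ hξ.ne']

lemma le_root_iff (hx : 0 ≤ x) (hy : 0 ≤ y) : x ≤ root ξ n y ↔ ξ * x ^ (n + 1) ≤ y := by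
  rw [root, Real.le_rpow_inv_iff_of_pos hx (div_nonneg hy hξ.le) (by positivity),
    ← Nat.cast_succ, Real.rpow_natCast, le_div_iff₀' hξ]

lemma root_le_iff (hx : 0 ≤ x) (hy : 0 ≤ y) : root ξ n y ≤ x ↔ y ≤ ξ * x ^ (n + 1) := by
  rw [root, Real.rpow_inv_le_iff_of_pos (div_nonneg hy hξ.le) hx (by positivity),
    ← Nat.cast_succ, Real.rpow_natCast, div_le_iff₀' hξ]

end root

/-- Level `n` of the construction asks `intPart n + a (n + 1) ≤ ξ α ^ (n + 1) ≤
intPart n + a (n + 1) + ε`, i.e. `α ∈ [lo n, hi n]`; the digit `c n` chooses `intPart (n + 1)`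
among `M` consecutive integers. -/
noncomputable def intPart (ξ : ℝ) (a : ℕ → ℝ) (T : ℝ) (c : ℕ → Fin M) : ℕ → ℤ
  | 0 => ⌈ξ * T⌉
  | n + 1 => ⌈ξ * root ξ n (intPart ξ a T c n + a (n + 1)) ^ (n + 2)⌉ + c n

noncomputable def lo (ξ : ℝ) (a : ℕ → ℝ) (T : ℝ) (c : ℕ → Fin M) (n : ℕ) : ℝ :=
  root ξ n (intPart ξ a T c n + a (n + 1))

noncomputable def hi (ξ ε : ℝ) (a : ℕ → ℝ) (T : ℝ) (c : ℕ → Fin M) (n : ℕ) : ℝ :=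
  root ξ n (intPart ξ a T c n + a (n + 1) + ε)

lemma intPart_succ (c : ℕ → Fin M) (n : ℕ) :
    intPart ξ a T c (n + 1) = ⌈ξ * lo ξ a T c n ^ (n + 2)⌉ + c n :=
  rfl

lemma intPart_eq_of_forall_lt {c c' : ℕ → Fin M} {n : ℕ} (h : ∀ m < n, c m = c' m) :
    intPart ξ a T c n = intPart ξ a T c' n := by
  induction n with
  | zero => rfl
  | succ n ih =>
    rw [intPart_succ, intPart_succ, lo, lo, ih fun m hm => h m (by omega), h n n.lt_succ_self]

section nested

variable (hξ : 0 < ξ) (hT : 0 ≤ T) (ha₀ : ∀ n, 0 ≤ a (n + 1)) (c : ℕ → Fin M)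
include hξ hT ha₀

lemma intPart_add_nonneg (n : ℕ) : 0 ≤ (intPart ξ a T c n : ℝ) + a (n + 1) := by
  refine add_nonneg ?_ (ha₀ n)
  cases n with
  | zero => exact_mod_cast Int.ceil_nonneg (by positivity)
  | succ n =>
    have hroot := root_nonneg hξ (n := n) (intPart_add_nonneg n)
    have : 0 ≤ intPart ξ a T c (n + 1) :=
      add_nonneg (Int.ceil_nonneg (mul_nonneg hξ.le (pow_nonneg hroot _))) (Int.natCast_nonneg _)
    exact_mod_cast this

lemma lo_nonneg (n : ℕ) : 0 ≤ lo ξ a T c n :=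
  root_nonneg hξ (intPart_add_nonneg hξ hT ha₀ c n)

lemma mul_lo_pow (n : ℕ) : ξ * lo ξ a T c n ^ (n + 1) = intPart ξ a T c n + a (n + 1) :=
  mul_root_pow hξ (intPart_add_nonneg hξ hT ha₀ c n)

variable (hε : 0 ≤ ε)
include hε

lemma mul_hi_pow (n : ℕ) :
    ξ * hi ξ ε a T c n ^ (n + 1) = intPart ξ a T c n + a (n + 1) + ε :=
  mul_root_pow hξ (add_nonneg (intPart_add_nonneg hξ hT ha₀ c n) hε)

lemma lo_le_hi (n : ℕ) : lo ξ a T c n ≤ hi ξ ε a T c n := by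
  rw [hi, le_root_iff hξ (lo_nonneg hξ hT ha₀ c n)
    (add_nonneg (intPart_add_nonneg hξ hT ha₀ c n) hε), mul_lo_pow hξ hT ha₀]
  linarith

/-- Over `[lo n, hi n] ⊆ [T, ∞)` the value `ξ α ^ (n + 2)` sweeps an interval of length at least
`T ε ≥ M + 1`, room for all `M` windows of the next level. -/
lemma lo_le_lo_succ_and_hi_succ_le_hi (ha₁ : ∀ n, a (n + 1) < 1 - ε) (hMT : M + 1 ≤ ε * T)
    {n : ℕ} (hTn : T ≤ lo ξ a T c n) :
    lo ξ a T c n ≤ lo ξ a T c (n + 1) ∧ hi ξ ε a T c (n + 1) ≤ hi ξ ε a T c n := by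
  set x := lo ξ a T c n
  set y := hi ξ ε a T c n
  have hx := lo_nonneg hξ hT ha₀ c n
  have hxy : x ≤ y := lo_le_hi hξ hT ha₀ c hε n
  have hgrowth : ξ * x ^ (n + 2) + (M + 1) ≤ ξ * y ^ (n + 2) := by
    have hlevel : ξ * y ^ (n + 1) - ξ * x ^ (n + 1) = ε := by
      rw [mul_hi_pow hξ hT ha₀ c hε, mul_lo_pow hξ hT ha₀]; ring
    have hyn : 0 ≤ ξ * y ^ (n + 1) * (y - x) := by
      have := hx.trans hxy; have := sub_nonneg.2 hxy; positivity
    have hsplit : ξ * y ^ (n + 2) - ξ * x ^ (n + 2) =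
        x * (ξ * y ^ (n + 1) - ξ * x ^ (n + 1)) + ξ * y ^ (n + 1) * (y - x) := by ring
    rw [hlevel] at hsplit
    nlinarith [mul_le_mul_of_nonneg_right hTn hε]
  have hceil := Int.ceil_lt_add_one (ξ * x ^ (n + 2))
  have hdigit : (c n : ℝ) + 1 ≤ M := by exact_mod_cast (c n).isLt
  have hk : (intPart ξ a T c (n + 1) : ℝ) = ⌈ξ * x ^ (n + 2)⌉ + (c n : ℝ) := by
    rw [intPart_succ]; push_cast; rfl
  constructor
  · rw [lo, le_root_iff hξ hx (intPart_add_nonneg hξ hT ha₀ c _), hk]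
    have := Int.le_ceil (ξ * x ^ (n + 2))
    have := ha₀ (n + 1)
    have : (0 : ℝ) ≤ c n := Nat.cast_nonneg _
    linarith
  · rw [hi, root_le_iff hξ (hx.trans hxy)
      (add_nonneg (intPart_add_nonneg hξ hT ha₀ c _) hε), hk]
    have := ha₁ (n + 1)
    linarith

variable (ha₁ : ∀ n, a (n + 1) < 1 - ε) (hMT : M + 1 ≤ ε * T)
include ha₁ hMT

lemma le_lo (n : ℕ) : T ≤ lo ξ a T c n := by
  induction n with
  | zero =>
    rw [lo, le_root_iff hξ hT (intPart_add_nonneg hξ hT ha₀ c 0), intPart, pow_one]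
    linarith [Int.le_ceil (ξ * T), ha₀ 0]
  | succ n ih => exact ih.trans (lo_le_lo_succ_and_hi_succ_le_hi hξ hT ha₀ c hε ha₁ hMT ih).1

lemma lo_monotone : Monotone (lo ξ a T c) :=
  monotone_nat_of_le_succ fun n =>
    (lo_le_lo_succ_and_hi_succ_le_hi hξ hT ha₀ c hε ha₁ hMT (le_lo hξ hT ha₀ c hε ha₁ hMT n)).1

lemma hi_antitone : Antitone (hi ξ ε a T c) :=
  antitone_nat_of_succ_le fun n =>
    (lo_le_lo_succ_and_hi_succ_le_hi hξ hT ha₀ c hε ha₁ hMT (le_lo hξ hT ha₀ c hε ha₁ hMT n)).2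

lemma hi_le (n : ℕ) : hi ξ ε a T c n ≤ T + 2 / ξ := by
  refine (hi_antitone hξ hT ha₀ c hε ha₁ hMT n.zero_le).trans ?_
  rw [hi, root_le_iff hξ (by positivity) (add_nonneg (intPart_add_nonneg hξ hT ha₀ c 0) hε),
    intPart, pow_one, mul_add, mul_div_cancel₀ _ hξ.ne']
  linarith [Int.ceil_lt_add_one (ξ * T), ha₁ 0]

noncomputable def point (ξ : ℝ) (a : ℕ → ℝ) (T : ℝ) (c : ℕ → Fin M) : ℝ := ⨆ n, lo ξ a T c n

lemma point_mem_Icc (n : ℕ) : point ξ a T c ∈ Icc (lo ξ a T c n) (hi ξ ε a T c n) :=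
  mem_iInter.1 ((lo_monotone hξ hT ha₀ c hε ha₁ hMT).ciSup_mem_iInter_Icc_of_antitone
    (hi_antitone hξ hT ha₀ c hε ha₁ hMT) (lo_le_hi hξ hT ha₀ c hε)) n

lemma le_point : T ≤ point ξ a T c :=
  (le_lo hξ hT ha₀ c hε ha₁ hMT 0).trans (point_mem_Icc hξ hT ha₀ c hε ha₁ hMT 0).1

lemma fract_point_pow_mem_Icc (n : ℕ) :
    Int.fract (ξ * point ξ a T c ^ (n + 1)) ∈ Icc (a (n + 1)) (a (n + 1) + ε) := by
  obtain ⟨hlo, hhi⟩ := point_mem_Icc hξ hT ha₀ c hε ha₁ hMT n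
  have hlo' := mul_lo_pow hξ hT ha₀ c n ▸
    mul_le_mul_of_nonneg_left (pow_le_pow_left₀ (lo_nonneg hξ hT ha₀ c n) hlo (n + 1)) hξ.le
  have hhi' := mul_hi_pow hξ hT ha₀ c hε n ▸ mul_le_mul_of_nonneg_left
    (pow_le_pow_left₀ ((lo_nonneg hξ hT ha₀ c n).trans hlo) hhi (n + 1)) hξ.le
  have hfloor : ⌊ξ * point ξ a T c ^ (n + 1)⌋ = intPart ξ a T c n :=
    Int.floor_eq_iff.2 ⟨by linarith [ha₀ n], by linarith [ha₁ n]⟩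
  rw [Int.fract, hfloor]
  constructor <;> linarith

end nested

section separation

variable (hξ : 0 < ξ) (hT : 0 ≤ T) (ha₀ : ∀ n, 0 ≤ a (n + 1)) (hε : 0 ≤ ε)
  (ha₁ : ∀ n, a (n + 1) < 1 - ε) (hMT : M + 1 ≤ ε * T)
include hξ hT ha₀ hε ha₁ hMT

lemma div_le_point_sub_point {c c' : ℕ → Fin M} {n : ℕ}
    (hlt : intPart ξ a T c n < intPart ξ a T c' n) :
    (1 - ε) / (ξ * (n + 1) * (T + 2 / ξ) ^ n) ≤ point ξ a T c' - point ξ a T c := by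
  set R := T + 2 / ξ
  set y := hi ξ ε a T c n
  set x := lo ξ a T c' n
  have hk : (intPart ξ a T c n : ℝ) + 1 ≤ intPart ξ a T c' n := by exact_mod_cast hlt
  have hx := lo_nonneg hξ hT ha₀ c' n
  have hy := (lo_nonneg hξ hT ha₀ c n).trans (lo_le_hi hξ hT ha₀ c hε n)
  have hgap : 1 - ε ≤ ξ * (x ^ (n + 1) - y ^ (n + 1)) := by
    rw [mul_sub, mul_lo_pow hξ hT ha₀, mul_hi_pow hξ hT ha₀ c hε]
    linarith
  have hyx : y ≤ x := by
    dsimp only [y]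
    rw [hi, root_le_iff hξ hx (add_nonneg (intPart_add_nonneg hξ hT ha₀ c n) hε),
      mul_lo_pow hξ hT ha₀]
    linarith [ha₀ n, ha₁ n]
  have hxR : x ≤ R := (lo_le_hi hξ hT ha₀ c' hε n).trans (hi_le hξ hT ha₀ c' hε ha₁ hMT n)
  have hpow : x ^ (n + 1) - y ^ (n + 1) ≤ (x - y) * (n + 1) * R ^ n := by
    have := abs_pow_sub_pow_le x y (n + 1)
    rw [abs_of_nonneg (sub_nonneg.2 (pow_le_pow_left₀ hy hyx _)), abs_of_nonneg (sub_nonneg.2 hyx),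
      abs_of_nonneg hx, abs_of_nonneg hy, max_eq_left hyx, Nat.add_sub_cancel] at this
    push_cast at this
    exact this.trans (by gcongr)
  have hx' := (point_mem_Icc hξ hT ha₀ c' hε ha₁ hMT n).1
  have hy' := (point_mem_Icc hξ hT ha₀ c hε ha₁ hMT n).2
  rw [div_le_iff₀ (by positivity)]
  calc 1 - ε ≤ ξ * ((x - y) * (n + 1) * R ^ n) := hgap.trans (by gcongr)
    _ ≤ ξ * ((point ξ a T c' - point ξ a T c) * (n + 1) * R ^ n) := by gcongr
    _ = (point ξ a T c' - point ξ a T c) * (ξ * (n + 1) * R ^ n) := by ring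

lemma div_pow_firstDiff_le_dist_point {c c' : ℕ → Fin M} (hne : c ≠ c') :
    (1 - ε) / (2 * ξ * (T + 2 / ξ)) / (2 * (T + 2 / ξ)) ^ firstDiff c c' ≤
      dist (point ξ a T c) (point ξ a T c') := by
  set n := firstDiff c c'
  set R := T + 2 / ξ
  have hsame : intPart ξ a T c n = intPart ξ a T c' n :=
    intPart_eq_of_forall_lt fun _ => apply_eq_of_lt_firstDiff
  have hdiff : intPart ξ a T c (n + 1) ≠ intPart ξ a T c' (n + 1) := by
    rw [intPart_succ, intPart_succ, lo, lo, hsame, Ne, add_right_inj, Nat.cast_inj,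
      Fin.val_inj]
    exact apply_firstDiff_ne hne
  have hbound : (1 - ε) / (2 * ξ * R) / (2 * R) ^ n ≤
      (1 - ε) / (ξ * ((n + 1 : ℕ) + 1) * R ^ (n + 1)) := by
    have h1ε : 0 ≤ 1 - ε := by linarith [ha₀ 0, ha₁ 0]
    have hn : ((n + 1 : ℕ) : ℝ) + 1 ≤ 2 ^ (n + 1) := by exact_mod_cast Nat.lt_two_pow_self
    rw [div_div]
    refine div_le_div_of_nonneg_left h1ε (by positivity) ?_
    calc ξ * ((n + 1 : ℕ) + 1) * R ^ (n + 1) ≤ ξ * 2 ^ (n + 1) * R ^ (n + 1) := by gcongr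
      _ = 2 * ξ * R * (2 * R) ^ n := by rw [mul_pow]; ring
  rcases hdiff.lt_or_gt with hlt | hgt
  · rw [dist_comm, Real.dist_eq]
    exact hbound.trans ((div_le_point_sub_point hξ hT ha₀ hε ha₁ hMT hlt).trans (le_abs_self _))
  · rw [Real.dist_eq]
    exact hbound.trans ((div_le_point_sub_point hξ hT ha₀ hε ha₁ hMT hgt).trans (le_abs_self _))

end separation

end FractPowCantor

open FractPowCantor in
theorem stmt_6 (ξ ε : ℝ) (hξ : 0 < ξ) (hε0 : 0 < ε) (hε1 : ε < 1)
    (a : ℕ → ℝ) (ha : ∀ n : ℕ, 1 ≤ n → 0 ≤ a n ∧ a n < 1 - ε) :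
    dimH {α : ℝ | 1 < α ∧ ∀ n : ℕ, 1 ≤ n →
      a n ≤ Int.fract (ξ * α ^ n) ∧ Int.fract (ξ * α ^ n) ≤ a n + ε} = 1 := by
  refine le_antisymm ((dimH_mono (subset_univ _)).trans_eq Real.dimH_univ) ?_
  refine ENNReal.le_of_forall_pos_nnreal_lt fun r hr hr1 => ?_
  have ha₀ : ∀ n, 0 ≤ a (n + 1) := fun n => (ha (n + 1) n.succ_pos).1
  have ha₁ : ∀ n, a (n + 1) < 1 - ε := fun n => (ha (n + 1) n.succ_pos).2
  obtain ⟨T, hT, hT1⟩ := ((eventually_rpow_add_le_mul (r := r) (by exact_mod_cast hr1) hε0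
    two_pos (4 / ξ) 2).and (eventually_gt_atTop 1)).exists
  set R := T + 2 / ξ
  set M := ⌈(2 * R) ^ (r : ℝ)⌉₊
  have hR : 1 < 2 * R := by
    have := div_pos two_pos hξ
    simp only [R]
    linarith
  have hM : 1 < M := Nat.lt_ceil.2 (by exact_mod_cast Real.one_lt_rpow hR (by positivity))
  have hMT : (M : ℝ) + 1 ≤ ε * T := by
    have := Nat.ceil_lt_add_one (Real.rpow_nonneg (by positivity : 0 ≤ 2 * R) r)
    rw [show 2 * T + 4 / ξ = 2 * R by ring] at hT
    linarith
  refine (le_dimH_range_of_separation hM (div_pos (sub_pos.2 hε1) (by positivity))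
    (by positivity) hr (Nat.le_ceil _)
    fun c c' => div_pow_firstDiff_le_dist_point hξ (by positivity) ha₀ hε0.le ha₁ hMT).trans
    (dimH_mono ?_)
  rintro _ ⟨c, rfl⟩
  refine ⟨hT1.trans_le (le_point hξ (by positivity) ha₀ c hε0.le ha₁ hMT), fun n hn => ?_⟩
  obtain ⟨n, rfl⟩ := Nat.exists_eq_add_of_le' hn
  exact fract_point_pow_mem_Icc hξ (by positivity) ha₀ c hε0.le ha₁ hMT n
end

section
/- Let 0 < ε ≤ 1/2 and let (a_n)_{n≥1} satisfy 0 ≤ a_n < 1 − ε. Let H be an integer with εH > 2. Then for every integer h with (H + a_1)^2 ≤ h and h + 1 ≤ (H + a_1 + ε)^2, the interval [√(h + a_2), √(h + a_2 + ε)] is contained in [H + a_1, H + a_1 + ε], and every real ξ in [√(h + a_2), √(h + a_2 + ε)] satisfies a_1 ≤ {ξ} ≤ a_1 + ε and a_2 ≤ {ξ^2} ≤ a_2 + ε. -/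
theorem stmt_7 (ε : ℝ) (hε0 : 0 < ε) (hε1 : ε ≤ 1/2)
    (a : ℕ → ℝ) (ha : ∀ n : ℕ, 1 ≤ n → 0 ≤ a n ∧ a n < 1 - ε)
    (H : ℤ) (hH : 2 < ε * H)
    (h : ℤ) (h1 : ((H : ℝ) + a 1) ^ 2 ≤ h) (h2 : (h : ℝ) + 1 ≤ ((H : ℝ) + a 1 + ε) ^ 2) :
    Set.Icc (Real.sqrt ((h : ℝ) + a 2)) (Real.sqrt ((h : ℝ) + a 2 + ε)) ⊆
      Set.Icc ((H : ℝ) + a 1) ((H : ℝ) + a 1 + ε) ∧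
    ∀ ξ ∈ Set.Icc (Real.sqrt ((h : ℝ) + a 2)) (Real.sqrt ((h : ℝ) + a 2 + ε)),
      a 1 ≤ Int.fract ξ ∧ Int.fract ξ ≤ a 1 + ε ∧
      a 2 ≤ Int.fract (ξ ^ 2) ∧ Int.fract (ξ ^ 2) ≤ a 2 + ε := by
  obtain ⟨ha1, ha1'⟩ := ha 1 le_rfl
  obtain ⟨ha2, ha2'⟩ := ha 2 (by norm_num)
  have hHpos : (0:ℝ) < (H:ℝ) := by nlinarith
  have hA0 : (0:ℝ) ≤ (H:ℝ) + a 1 := by linarith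
  have hha2 : (0:ℝ) ≤ (h:ℝ) + a 2 := by nlinarith
  have hsub : Set.Icc (Real.sqrt ((h : ℝ) + a 2)) (Real.sqrt ((h : ℝ) + a 2 + ε)) ⊆
      Set.Icc ((H : ℝ) + a 1) ((H : ℝ) + a 1 + ε) := by
    rintro ξ ⟨hl, hr⟩
    constructor
    · have : (H:ℝ) + a 1 ≤ Real.sqrt ((h:ℝ) + a 2) := by
        rw [show (H:ℝ) + a 1 = Real.sqrt (((H:ℝ)+a 1)^2) from (Real.sqrt_sq hA0).symm]
        exact Real.sqrt_le_sqrt (by linarith)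
      linarith
    · have : Real.sqrt ((h:ℝ) + a 2 + ε) ≤ (H:ℝ) + a 1 + ε := by
        rw [show (H:ℝ) + a 1 + ε = Real.sqrt (((H:ℝ)+a 1+ε)^2) from
          (Real.sqrt_sq (by linarith)).symm]
        exact Real.sqrt_le_sqrt (by linarith)
      linarith
  refine ⟨hsub, ?_⟩
  rintro ξ ⟨hl, hr⟩
  obtain ⟨hL, hR⟩ := hsub ⟨hl, hr⟩
  have hξ0 : 0 ≤ ξ := le_trans (Real.sqrt_nonneg _) hl
  have hsq1 : (h:ℝ) + a 2 ≤ ξ^2 := by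
    nlinarith [Real.sq_sqrt hha2, Real.sqrt_nonneg ((h:ℝ)+a 2)]
  have hsq2 : ξ^2 ≤ (h:ℝ) + a 2 + ε := by
    nlinarith [Real.sq_sqrt (show (0:ℝ) ≤ (h:ℝ)+a 2+ε by linarith),
      Real.sqrt_nonneg ((h:ℝ)+a 2+ε)]
  have hf1 : Int.fract ξ = ξ - (H:ℝ) := by
    have : ⌊ξ⌋ = H := by
      rw [Int.floor_eq_iff]
      constructor
      · linarith
      · push_cast; linarith
    rw [Int.fract, this]
  have hf2 : Int.fract (ξ^2) = ξ^2 - (h:ℝ) := by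
    have : ⌊ξ^2⌋ = h := by
      rw [Int.floor_eq_iff]
      constructor
      · linarith
      · push_cast; linarith
    rw [Int.fract, this]
  refine ⟨?_, ?_, ?_, ?_⟩ <;> simp only [hf1, hf2] <;> linarith
end

section
/- The set E of real numbers α > 1 such that the sequence of fractional parts ({α^n})_{n≥1} is not dense in [0,1] has Hausdorff dimension 1. -/
/-!
Fix `B ≥ 2` and `M = 2B + 1`, and let `S ⊆ [M, M + 1]` be the set of `α` with
`{α ^ n} ≤ 1/2` for all `n ≥ 1`; such `α` never come near `3/4`. Reading `⌊α ^ (n + 2)⌋ mod B`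
as the `n`-th base-`B` digit maps `S` onto `[0, 1]`: nested intervals produce an `α` with any
prescribed digits, since `x ↦ x ^ ((n + 2) / (n + 1))` stretches an interval of length `1/2`
to one of length about `M / 2 > B`. Two points of `S` whose `n`-th digits differ have powers
`α ^ (n + 2)` at least `1/2` apart, hence are at least `(4(M + 1)) ^ -(n + 1)` apart, which
makes the digit map Hölder of exponent `θ` as soon as `(4(M + 1)) ^ θ ≤ B`. Such maps cannot
raise dimension by more than the factor `1/θ`, so `dim S ≥ θ`, and `θ` can be taken arbitrarily
close to `1` by letting `B → ∞`.
-/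

open Set Filter
open scoped NNReal ENNReal

theorem HolderOnWith.of_dist_le {X Y : Type*} [PseudoMetricSpace X] [PseudoMetricSpace Y]
    {C r : ℝ≥0} {f : X → Y} {s : Set X}
    (h : ∀ x ∈ s, ∀ y ∈ s, dist (f x) (f y) ≤ C * dist x y ^ (r : ℝ)) :
    HolderOnWith C r f s := by
  intro x hx y hy
  rw [edist_nndist, edist_nndist, ← ENNReal.coe_rpow_of_nonneg _ r.coe_nonneg,
    ← ENNReal.coe_mul, ENNReal.coe_le_coe, ← NNReal.coe_le_coe]
  exact h x hx y hy

theorem HolderOnWith.mul_finrank_le_dimH {X E : Type*} [EMetricSpace X] [NormedAddCommGroup E]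
    [NormedSpace ℝ E] [FiniteDimensional ℝ E] {C r : ℝ≥0} {f : X → E} {s : Set X}
    (hf : HolderOnWith C r f s) (hr : 0 < r) (hs : (interior (f '' s)).Nonempty) :
    (r : ℝ≥0∞) * Module.finrank ℝ E ≤ dimH s := by
  have := (Real.dimH_of_nonempty_interior hs).symm.trans_le (hf.dimH_image_le hr)
  rwa [ENNReal.le_div_iff_mul_le (.inl (by exact_mod_cast hr.ne')) (.inl ENNReal.coe_ne_top),
    mul_comm] at this

theorem holderOnWith_ofDigits_of_separated {X : Type*} [PseudoMetricSpace X] {b : ℕ} {s : Set X}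
    {d : X → ℕ → Fin b} {K : ℝ} {θ : ℝ≥0} (hK0 : 0 < K) (hK : K ^ (θ : ℝ) ≤ b)
    (hsep : ∀ x ∈ s, ∀ y ∈ s, ∀ n, d x n ≠ d y n → 1 ≤ K ^ (n + 1) * dist x y) :
    HolderOnWith b θ (fun x ↦ Real.ofDigits (d x)) s := by
  refine .of_dist_le fun x hx y hy ↦ ?_
  by_cases hxy : ∃ n, d x n ≠ d y n
  swap
  · push Not at hxy
    simp only [funext hxy, dist_self]
    positivity
  set n := Nat.find hxy
  have hdist := hsep x hx y hy n (Nat.find_spec hxy)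
  have hb : (0 : ℝ) < b := by exact_mod_cast Fin.pos (d x 0)
  have hgap : (K ^ (n + 1))⁻¹ ≤ dist x y := by
    rwa [inv_le_iff_one_le_mul₀' (by positivity)]
  calc dist (Real.ofDigits (d x)) (Real.ofDigits (d y)) ≤ ((b : ℝ) ^ n)⁻¹ :=
        Real.abs_ofDigits_sub_ofDigits_le fun i hi ↦ not_not.1 (Nat.find_min hxy hi)
    _ = b * ((b : ℝ) ^ (n + 1))⁻¹ := by field_simp; ring
    _ ≤ b * ((K ^ (θ : ℝ)) ^ (n + 1))⁻¹ := by gcongr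
    _ = b * ((K ^ (n + 1))⁻¹) ^ (θ : ℝ) := by
        rw [Real.inv_rpow (by positivity), ← Real.rpow_natCast, ← Real.rpow_natCast K,
          ← Real.rpow_mul hK0.le, ← Real.rpow_mul hK0.le, mul_comm (θ : ℝ)]
    _ ≤ b * dist x y ^ (θ : ℝ) := by gcongr

theorem half_le_abs_sub_of_floor_ne {x y : ℝ} (hx : Int.fract x ≤ 1 / 2)
    (hy : Int.fract y ≤ 1 / 2) (h : ⌊x⌋ ≠ ⌊y⌋) : 1 / 2 ≤ |x - y| := by
  have hx0 := Int.fract_nonneg x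
  have hy0 := Int.fract_nonneg y
  rw [← Int.floor_add_fract x, ← Int.floor_add_fract y]
  rcases h.lt_or_gt with h | h
  · have : (⌊x⌋ : ℝ) + 1 ≤ ⌊y⌋ := by exact_mod_cast h
    rw [abs_sub_comm, abs_of_nonneg (by linarith)]
    linarith
  · have : (⌊y⌋ : ℝ) + 1 ≤ ⌊x⌋ := by exact_mod_cast h
    rw [abs_of_nonneg (by linarith)]
    linarith

def powFractLeHalf (M : ℕ) : Set ℝ :=
  {α ∈ Icc (M : ℝ) (M + 1) | ∀ n : ℕ, Int.fract (α ^ (n + 1)) ≤ 1 / 2}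

noncomputable def powDigits (B : ℕ) [NeZero B] (α : ℝ) (n : ℕ) : Fin B :=
  Fin.ofNat B ⌊α ^ (n + 2)⌋₊

theorem powFractLeHalf_subset {M : ℕ} (hM : 2 ≤ M) :
    powFractLeHalf M ⊆ {α : ℝ | 1 < α ∧ ¬ Set.Icc (0 : ℝ) 1 ⊆
      closure {x : ℝ | ∃ n : ℕ, 1 ≤ n ∧ x = Int.fract (α ^ n)}} := by
  rintro α ⟨⟨hMα, -⟩, hfract⟩
  refine ⟨by linarith [show (2 : ℝ) ≤ M by exact_mod_cast hM], fun hsub ↦ ?_⟩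
  have hclosure : closure {x : ℝ | ∃ n : ℕ, 1 ≤ n ∧ x = Int.fract (α ^ n)} ⊆ Iic (1 / 2) := by
    refine closure_minimal ?_ isClosed_Iic
    rintro x ⟨n, hn, rfl⟩
    obtain ⟨k, rfl⟩ := Nat.exists_eq_add_of_le' hn
    exact hfract k
  have := hclosure (hsub (show (3 / 4 : ℝ) ∈ Icc 0 1 by norm_num))
  norm_num at this

theorem one_le_mul_dist_of_powDigits_ne {B M : ℕ} [NeZero B] {α β : ℝ}
    (hα : α ∈ powFractLeHalf M) (hβ : β ∈ powFractLeHalf M) {n : ℕ}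
    (h : powDigits B α n ≠ powDigits B β n) : 1 ≤ (4 * (M + 1)) ^ (n + 1) * dist α β := by
  have hfloor : ⌊α ^ (n + 2)⌋ ≠ ⌊β ^ (n + 2)⌋ := fun h' ↦
    h (by rw [powDigits, powDigits, ← Int.floor_toNat, ← Int.floor_toNat, h'])
  have hgap : 1 / 2 ≤ |α ^ (n + 2) - β ^ (n + 2)| :=
    half_le_abs_sub_of_floor_ne (hα.2 (n + 1)) (hβ.2 (n + 1)) hfloor
  have hM : (0 : ℝ) ≤ M := M.cast_nonneg
  have hmax : max |α| |β| ≤ M + 1 := by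
    rw [abs_of_nonneg (by linarith [hα.1.1]), abs_of_nonneg (by linarith [hβ.1.1])]
    exact max_le hα.1.2 hβ.1.2
  have hlip : |α ^ (n + 2) - β ^ (n + 2)| ≤ |α - β| * (n + 2) * (M + 1) ^ (n + 1) := by
    calc _ ≤ |α - β| * (n + 2 : ℕ) * max |α| |β| ^ (n + 2 - 1) := abs_pow_sub_pow_le ..
      _ ≤ _ := by push_cast; gcongr
  have hbernoulli : 2 * ((n : ℝ) + 2) ≤ 4 ^ (n + 1) := by
    have := one_add_mul_le_pow (show (-2 : ℝ) ≤ 3 by norm_num) (n + 1)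
    norm_num at this
    linarith
  calc (1 : ℝ) ≤ 2 * ((n : ℝ) + 2) * (M + 1) ^ (n + 1) * |α - β| := by nlinarith
    _ ≤ 4 ^ (n + 1) * (M + 1) ^ (n + 1) * |α - β| := by gcongr
    _ = (4 * (M + 1)) ^ (n + 1) * dist α β := by rw [mul_pow, Real.dist_eq]

theorem exists_mod_eq_mem_Ico {b r : ℕ} (hr : r < b) {x : ℝ} (hx : 0 ≤ x) :
    ∃ J : ℕ, J % b = r ∧ x ≤ J ∧ (J : ℝ) < x + b := by
  have hb : (0 : ℝ) < b := by exact_mod_cast (r.zero_le.trans_lt hr)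
  set q := ⌊x / b⌋₊
  have hq : b * q ≤ x := by
    rw [mul_comm, ← le_div_iff₀ hb]; exact Nat.floor_le (by positivity)
  have hq' : x < b * q + b := by
    have := Nat.lt_floor_add_one (x / b)
    rw [div_lt_iff₀ hb] at this
    linarith
  have hrb : (r : ℝ) < b := by exact_mod_cast hr
  by_cases h : x ≤ r + b * q
  · refine ⟨r + b * q, ?_, by push_cast; exact h, by push_cast; linarith⟩
    rw [Nat.add_mul_mod_self_left, Nat.mod_eq_of_lt hr]
  · refine ⟨r + b * (q + 1), ?_, by push_cast; linarith, by push_cast; linarith⟩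
    rw [Nat.add_mul_mod_self_left, Nat.mod_eq_of_lt hr]

section NestedIntervals

variable {B : ℕ} (M : ℕ) (e : ℕ → Fin B)

/-- `powFloors M e n` is the integer part of `α ^ (n + 1)` for the `α` built below. -/
noncomputable def powFloors : ℕ → ℕ
  | 0 => M
  | n + 1 => (exists_mod_eq_mem_Ico (e n).isLt
      (by positivity : (0 : ℝ) ≤ ((powFloors n : ℝ) ^ ((n + 1 : ℕ) : ℝ)⁻¹) ^ (n + 2))).choose

noncomputable def lowerRoot (n : ℕ) : ℝ := (powFloors M e n : ℝ) ^ ((n + 1 : ℕ) : ℝ)⁻¹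

noncomputable def upperRoot (n : ℕ) : ℝ := (powFloors M e n + 1 / 2 : ℝ) ^ ((n + 1 : ℕ) : ℝ)⁻¹

theorem powFloors_succ_spec (n : ℕ) :
    powFloors M e (n + 1) % B = e n ∧ lowerRoot M e n ^ (n + 2) ≤ powFloors M e (n + 1) ∧
      (powFloors M e (n + 1) : ℝ) < lowerRoot M e n ^ (n + 2) + B :=
  (exists_mod_eq_mem_Ico (e n).isLt (by positivity)).choose_spec

theorem lowerRoot_pow (n : ℕ) : lowerRoot M e n ^ (n + 1) = powFloors M e n :=
  Real.rpow_inv_natCast_pow (by positivity) n.succ_ne_zero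

theorem upperRoot_pow (n : ℕ) : upperRoot M e n ^ (n + 1) = powFloors M e n + 1 / 2 :=
  Real.rpow_inv_natCast_pow (by positivity) n.succ_ne_zero

theorem lowerRoot_le_upperRoot (n : ℕ) : lowerRoot M e n ≤ upperRoot M e n :=
  Real.rpow_le_rpow (by positivity) (by linarith) (by positivity)

theorem monotone_lowerRoot : Monotone (lowerRoot M e) := by
  refine monotone_nat_of_le_succ fun n ↦ ?_
  rw [← pow_le_pow_iff_left₀ (by unfold lowerRoot; positivity) (by unfold lowerRoot; positivity)
    (n + 1).succ_ne_zero, lowerRoot_pow]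
  exact (powFloors_succ_spec M e n).2.1

theorem le_lowerRoot (n : ℕ) : (M : ℝ) ≤ lowerRoot M e n := by
  calc (M : ℝ) = lowerRoot M e 0 := by simp [lowerRoot, powFloors]
    _ ≤ lowerRoot M e n := monotone_lowerRoot M e n.zero_le

/-- The window `[lowerRoot n ^ (n + 2), upperRoot n ^ (n + 2)]` has length at least
`lowerRoot n / 2 ≥ M / 2`, so it holds the next floor with room `1 / 2` to spare. -/
theorem antitone_upperRoot (hM : 2 * B + 1 ≤ M) : Antitone (upperRoot M e) := by
  refine antitone_nat_of_succ_le fun n ↦ ?_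
  rw [← pow_le_pow_iff_left₀ (by unfold upperRoot; positivity) (by unfold upperRoot; positivity)
    (n + 1).succ_ne_zero, Nat.succ_eq_add_one, upperRoot_pow]
  have hlo := lowerRoot_pow M e n
  have hhi := upperRoot_pow M e n
  have hle := lowerRoot_le_upperRoot M e n
  have hMlo := le_lowerRoot M e n
  have hJ : (0 : ℝ) ≤ powFloors M e n := by positivity
  have hMB : (2 * B + 1 : ℝ) ≤ M := by exact_mod_cast hM
  have hwindow : lowerRoot M e n ^ (n + 2) + B + 1 / 2 ≤ upperRoot M e n ^ (n + 2) := by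
    rw [pow_succ, pow_succ (upperRoot M e n), hlo, hhi]
    nlinarith [mul_nonneg (sub_nonneg.2 hle) hJ]
  linarith [(powFloors_succ_spec M e n).2.2]

end NestedIntervals

theorem exists_mem_powFractLeHalf_powDigits_eq {B M : ℕ} [NeZero B] (hM : 2 * B + 1 ≤ M)
    (e : ℕ → Fin B) : ∃ α ∈ powFractLeHalf M, powDigits B α = e := by
  obtain ⟨α, hα⟩ : ∃ α, ∀ n, α ∈ Icc (lowerRoot M e n) (upperRoot M e n) :=
    ⟨_, mem_iInter.1 <| (monotone_lowerRoot M e).ciSup_mem_iInter_Icc_of_antitone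
      (antitone_upperRoot M e hM) (lowerRoot_le_upperRoot M e)⟩
  have hα0 : 0 ≤ α := (M.cast_nonneg.trans (le_lowerRoot M e 0)).trans (hα 0).1
  have hpow (n : ℕ) : (powFloors M e n : ℝ) ≤ α ^ (n + 1) ∧
      α ^ (n + 1) ≤ powFloors M e n + 1 / 2 := by
    rw [← upperRoot_pow, ← lowerRoot_pow]
    exact ⟨pow_le_pow_left₀ (M.cast_nonneg.trans (le_lowerRoot M e n)) (hα n).1 _,
      pow_le_pow_left₀ hα0 (hα n).2 _⟩
  have hfloor (n : ℕ) : ⌊α ^ (n + 1)⌋₊ = powFloors M e n :=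
    (Nat.floor_eq_iff (by positivity)).2 ⟨(hpow n).1, by linarith [(hpow n).2]⟩
  refine ⟨α, ⟨⟨?_, ?_⟩, fun n ↦ ?_⟩, funext fun n ↦ Fin.ext ?_⟩
  · exact (le_lowerRoot M e 0).trans (hα 0).1
  · have : upperRoot M e 0 = M + 1 / 2 := by simp [upperRoot, powFloors]
    linarith [(hα 0).2]
  · rw [Int.fract, ← Int.natCast_floor_eq_floor (by positivity), hfloor n]
    push_cast
    linarith [(hpow n).2]
  · rw [powDigits, Fin.val_ofNat, hfloor (n + 1)]
    exact (powFloors_succ_spec M e n).1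

theorem eventually_mul_rpow_le {c θ : ℝ} (hc : 0 ≤ c) (hθ : θ < 1) :
    ∀ᶠ x : ℝ in atTop, (c * x) ^ θ ≤ x := by
  filter_upwards [(tendsto_rpow_atTop (sub_pos.2 hθ)).eventually_ge_atTop (c ^ θ),
    eventually_gt_atTop 0] with x hx hx0
  calc (c * x) ^ θ = c ^ θ * x ^ θ := Real.mul_rpow hc hx0.le
    _ ≤ x ^ (1 - θ) * x ^ θ := by gcongr
    _ = x := by rw [← Real.rpow_add hx0, sub_add_cancel, Real.rpow_one]

theorem stmt_17 :
    dimH {α : ℝ | 1 < α ∧ ¬ Set.Icc (0 : ℝ) 1 ⊆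
      closure {x : ℝ | ∃ n : ℕ, 1 ≤ n ∧ x = Int.fract (α ^ n)}} = 1 := by
  refine le_antisymm ((dimH_mono (subset_univ _)).trans_eq Real.dimH_univ)
    (ENNReal.le_of_forall_nnreal_lt fun r hr ↦ ?_)
  rcases eq_zero_or_pos r with rfl | hr0
  · simp
  obtain ⟨B, hB, hB2⟩ := ((tendsto_natCast_atTop_atTop.eventually
    (eventually_mul_rpow_le (c := 16) (θ := r) (by norm_num) (by exact_mod_cast hr))).and
    (eventually_ge_atTop 2)).exists
  have : NeZero B := ⟨by omega⟩
  set M := 2 * B + 1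
  have hK : (4 * ((M : ℝ) + 1)) ^ (r : ℝ) ≤ B := by
    refine le_trans (Real.rpow_le_rpow (by positivity) ?_ r.coe_nonneg) hB
    push_cast [M]
    linarith [show (2 : ℝ) ≤ B by exact_mod_cast hB2]
  have hholder := holderOnWith_ofDigits_of_separated (s := powFractLeHalf M)
    (d := powDigits B) (by positivity) hK fun α hα β hβ _ ↦ one_le_mul_dist_of_powDigits_ne hα hβ
  have hsurj : Icc 0 1 ⊆ (fun α ↦ Real.ofDigits (powDigits B α)) '' powFractLeHalf M := by
    intro y hy
    obtain ⟨e, -, rfl⟩ := Real.ofDigits_SurjOn (b := B) (by omega) hy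
    obtain ⟨α, hα, rfl⟩ := exists_mem_powFractLeHalf_powDigits_eq le_rfl e
    exact ⟨α, hα, rfl⟩
  calc (r : ℝ≥0∞) = r * Module.finrank ℝ ℝ := by simp
    _ ≤ dimH (powFractLeHalf M) := hholder.mul_finrank_le_dimH hr0
      (Nonempty.mono (interior_mono hsurj) ⟨1 / 2, by rw [interior_Icc]; norm_num⟩)
    _ ≤ _ := dimH_mono (powFractLeHalf_subset (by omega))
end

section
/- For every ε > 0 with ε < 1 and every interval [a, a+ε] ⊆ [0,1), the set of real numbers α > 1 such that {α^n} ∈ [a, a+ε] for all positive integers n is uncountable. -/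
open Real

noncomputable section

namespace Stmt18Aux

/-- the base constant -/
def Rc (ε : ℝ) : ℝ := max 2 (4 / ε)

lemma Rc_two (ε : ℝ) : (2:ℝ) ≤ Rc ε := le_max_left _ _

lemma Rc_pos (ε : ℝ) : (0:ℝ) < Rc ε := lt_of_lt_of_le two_pos (Rc_two ε)

lemma Rc_mul {ε : ℝ} (hε0 : 0 < ε) : (4:ℝ) ≤ ε * Rc ε := by
  have h : 4 / ε ≤ Rc ε := le_max_right _ _
  have := mul_le_mul_of_nonneg_left h hε0.le
  rwa [mul_div_cancel₀ _ hε0.ne'] at this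

/-- `c` is a good next integer after `m` at exponent `n`. -/
def good (ε a : ℝ) (n : ℕ) (m c : ℤ) : Prop :=
  ((m : ℝ) + a) ^ (((n : ℝ) + 1) / n) ≤ (c : ℝ) + a ∧
    (c : ℝ) + a + ε ≤ ((m : ℝ) + a + ε) ^ (((n : ℝ) + 1) / n)

lemma two_le_pow {ε : ℝ} (n : ℕ) (hn : 1 ≤ n) : (2:ℝ) ≤ Rc ε ^ n := by
  calc (2:ℝ) ≤ 2 ^ n := le_self_pow₀ one_le_two (by omega)
    _ ≤ Rc ε ^ n := pow_le_pow_left₀ (by norm_num) (Rc_two ε) n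

lemma exists_pair {ε a : ℝ} (hε0 : 0 < ε) (ha0 : 0 ≤ a) (ha1 : a + ε < 1)
    (n : ℕ) (hn : 1 ≤ n) (m : ℤ) (hm : Rc ε ^ n ≤ (m : ℝ) + a) :
    ∃ p q : ℤ, p + 1 ≤ q ∧ good ε a n m p ∧ good ε a n m q := by
  set A : ℝ := (m : ℝ) + a with hA
  set B : ℝ := A + ε with hB
  have h2A : (2:ℝ) ≤ A := le_trans (two_le_pow n hn) hm
  have hA0 : (0:ℝ) < A := by linarith
  have hB0 : (0:ℝ) < B := by simp only [hB]; linarith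
  have hn0 : (0:ℝ) < (n : ℝ) := by exact_mod_cast Nat.pos_of_ne_zero (by omega)
  set e : ℝ := ((n : ℝ) + 1) / n with he
  have hed : e = 1 + 1 / (n : ℝ) := by rw [he]; field_simp
  have he0 : (0:ℝ) ≤ e := by rw [hed]; positivity
  have hroot : Rc ε ≤ A ^ (1 / (n:ℝ)) := by
    have h1 : Rc ε = (Rc ε ^ n) ^ (1 / (n:ℝ)) := by
      rw [← Real.rpow_natCast (Rc ε) n, ← Real.rpow_mul (Rc_pos ε).le,
        mul_one_div, div_self hn0.ne', Real.rpow_one]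
    rw [h1]
    exact Real.rpow_le_rpow (pow_nonneg (Rc_pos ε).le n) hm (by positivity)
  have hAB : A ^ (1/(n:ℝ)) ≤ B ^ (1/(n:ℝ)) :=
    Real.rpow_le_rpow hA0.le (by simp [hB]; linarith) (by positivity)
  have hXe : A ^ e = A * A ^ (1/(n:ℝ)) := by
    rw [hed, Real.rpow_add hA0, Real.rpow_one]
  have hYe : B ^ e = B * B ^ (1/(n:ℝ)) := by
    rw [hed, Real.rpow_add hB0, Real.rpow_one]
  have key : A ^ e + 4 ≤ B ^ e := by
    rw [hXe, hYe]
    have h4 : (4:ℝ) ≤ ε * Rc ε := Rc_mul hε0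
    have h5 : B * A ^ (1/(n:ℝ)) = A * A ^ (1/(n:ℝ)) + ε * A ^ (1/(n:ℝ)) := by
      rw [hB]; ring
    have h6 : B * A ^ (1/(n:ℝ)) ≤ B * B ^ (1/(n:ℝ)) :=
      mul_le_mul_of_nonneg_left hAB hB0.le
    have h7 : ε * Rc ε ≤ ε * A ^ (1/(n:ℝ)) :=
      mul_le_mul_of_nonneg_left hroot hε0.le
    linarith
  refine ⟨⌈A ^ e⌉, ⌈A ^ e⌉ + 1, le_refl _, ⟨?_, ?_⟩, ⟨?_, ?_⟩⟩
  · have := Int.le_ceil (A ^ e); push_cast; linarith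
  · have := Int.ceil_lt_add_one (A ^ e); push_cast; linarith
  · have := Int.le_ceil (A ^ e); push_cast; linarith
  · have := Int.ceil_lt_add_one (A ^ e); push_cast; linarith

open Classical in
def pick (ε a : ℝ) (n : ℕ) (m : ℤ) : ℤ × ℤ :=
  if h : ∃ p q : ℤ, p + 1 ≤ q ∧ good ε a n m p ∧ good ε a n m q then
    (h.choose, h.choose_spec.choose)
  else (0, 0)

lemma pick_spec {ε a : ℝ} {n : ℕ} {m : ℤ}
    (h : ∃ p q : ℤ, p + 1 ≤ q ∧ good ε a n m p ∧ good ε a n m q) :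
    (pick ε a n m).1 + 1 ≤ (pick ε a n m).2 ∧
      good ε a n m (pick ε a n m).1 ∧ good ε a n m (pick ε a n m).2 := by
  rw [pick, dif_pos h]
  exact h.choose_spec.choose_spec

/-- `Mseq σ n` is the integer part target for the exponent `n+1`. -/
def Mseq (ε a : ℝ) (σ : ℕ → Bool) : ℕ → ℤ
  | 0 => ⌈Rc ε⌉
  | n + 1 =>
    if σ n then (pick ε a (n + 1) (Mseq ε a σ n)).1
    else (pick ε a (n + 1) (Mseq ε a σ n)).2

lemma good_lower {ε a : ℝ} {n : ℕ} {m c : ℤ} (hg : good ε a n m c)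
    (hn : 1 ≤ n) (hm : Rc ε ^ n ≤ (m : ℝ) + a) :
    Rc ε ^ (n + 1) ≤ (c : ℝ) + a := by
  have hn0 : (0:ℝ) < (n : ℝ) := by exact_mod_cast Nat.pos_of_ne_zero (by omega)
  have h1 : (Rc ε ^ n : ℝ) ^ (((n:ℝ)+1)/n) = Rc ε ^ (n+1) := by
    rw [← Real.rpow_natCast (Rc ε) n, ← Real.rpow_mul (Rc_pos ε).le]
    rw [show (n:ℝ) * (((n:ℝ)+1)/n) = ((n:ℝ)+1) by field_simp]
    rw [show ((n:ℝ)+1) = ((n+1 : ℕ) : ℝ) by push_cast; ring, Real.rpow_natCast]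
  calc Rc ε ^ (n+1) = (Rc ε ^ n : ℝ) ^ (((n:ℝ)+1)/n) := h1.symm
    _ ≤ ((m:ℝ) + a) ^ (((n:ℝ)+1)/n) :=
        Real.rpow_le_rpow (pow_nonneg (Rc_pos ε).le n) hm (by positivity)
    _ ≤ (c:ℝ) + a := hg.1

lemma Mseq_lower {ε a : ℝ} (hε0 : 0 < ε) (ha0 : 0 ≤ a) (ha1 : a + ε < 1)
    (σ : ℕ → Bool) : ∀ n, Rc ε ^ (n + 1) ≤ (Mseq ε a σ n : ℝ) + a := by
  intro n
  induction n with
  | zero =>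
    simp only [Mseq, zero_add, pow_one]
    have := Int.le_ceil (Rc ε)
    linarith
  | succ n ih =>
    have hex := exists_pair hε0 ha0 ha1 (n+1) (by omega) (Mseq ε a σ n) ih
    have hs := pick_spec hex
    rw [Mseq]
    cases hσ : σ n with
    | true => simpa [hσ] using good_lower hs.2.1 (by omega) ih
    | false => simpa [hσ] using good_lower hs.2.2 (by omega) ih

lemma Mseq_good {ε a : ℝ} (hε0 : 0 < ε) (ha0 : 0 ≤ a) (ha1 : a + ε < 1)
    (σ : ℕ → Bool) (n : ℕ) :
    good ε a (n + 1) (Mseq ε a σ n) (Mseq ε a σ (n + 1)) := by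
  have hex := exists_pair hε0 ha0 ha1 (n+1) (by omega) (Mseq ε a σ n)
    (Mseq_lower hε0 ha0 ha1 σ n)
  have hs := pick_spec hex
  rw [Mseq]
  cases hσ : σ n with
  | true => simpa [hσ] using hs.2.1
  | false => simpa [hσ] using hs.2.2

def Aseq (ε a : ℝ) (σ : ℕ → Bool) (n : ℕ) : ℝ := (Mseq ε a σ n : ℝ) + a

lemma one_le_Aseq {ε a : ℝ} (hε0 : 0 < ε) (ha0 : 0 ≤ a) (ha1 : a + ε < 1)
    (σ : ℕ → Bool) (n : ℕ) : (1:ℝ) ≤ Aseq ε a σ n :=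
  le_trans (by linarith [two_le_pow (ε := ε) (n+1) (by omega)]) (Mseq_lower hε0 ha0 ha1 σ n)

def sseq (ε a : ℝ) (σ : ℕ → Bool) (n : ℕ) : ℝ :=
  (Aseq ε a σ n) ^ (((n + 1 : ℕ) : ℝ))⁻¹

def tseq (ε a : ℝ) (σ : ℕ → Bool) (n : ℕ) : ℝ :=
  (Aseq ε a σ n + ε) ^ (((n + 1 : ℕ) : ℝ))⁻¹

section
variable {ε a : ℝ} (hε0 : 0 < ε) (ha0 : 0 ≤ a) (ha1 : a + ε < 1) (σ : ℕ → Bool)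

include hε0 ha0 ha1

lemma Aseq_pos (n : ℕ) : (0:ℝ) < Aseq ε a σ n :=
  lt_of_lt_of_le one_pos (one_le_Aseq hε0 ha0 ha1 σ n)

lemma sseq_le_succ (n : ℕ) : sseq ε a σ n ≤ sseq ε a σ (n + 1) := by
  have hg := (Mseq_good hε0 ha0 ha1 σ n).1
  have hA0 := (Aseq_pos hε0 ha0 ha1 σ n).le
  have hA0' := (Aseq_pos hε0 ha0 ha1 σ (n+1)).le
  have hexp : ((((n+1:ℕ):ℝ) + 1) / ((n+1:ℕ):ℝ)) * (((n + 2 : ℕ) : ℝ))⁻¹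
      = (((n + 1 : ℕ) : ℝ))⁻¹ := by
    push_cast
    have h2 : ((n:ℝ) + 2) ≠ 0 := by positivity
    have h1 : ((n:ℝ) + 1) ≠ 0 := by positivity
    field_simp
    ring
  have h1 : sseq ε a σ n
      = ((Aseq ε a σ n) ^ ((((n+1:ℕ):ℝ) + 1) / ((n+1:ℕ):ℝ))) ^ (((n + 2 : ℕ) : ℝ))⁻¹ := by
    rw [← Real.rpow_mul hA0, hexp, sseq]
  rw [h1, sseq, show n + 1 + 1 = n + 2 from rfl]
  exact Real.rpow_le_rpow (Real.rpow_nonneg hA0 _) (by exact_mod_cast hg) (by positivity)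

lemma tseq_succ_le (n : ℕ) : tseq ε a σ (n + 1) ≤ tseq ε a σ n := by
  have hg := (Mseq_good hε0 ha0 ha1 σ n).2
  have hA0 := (Aseq_pos hε0 ha0 ha1 σ n).le
  have hB0 : (0:ℝ) ≤ Aseq ε a σ n + ε := by linarith
  have hB0' : (0:ℝ) ≤ Aseq ε a σ (n+1) + ε := by
    linarith [(Aseq_pos hε0 ha0 ha1 σ (n+1)).le]
  have hexp : ((((n+1:ℕ):ℝ) + 1) / ((n+1:ℕ):ℝ)) * (((n + 2 : ℕ) : ℝ))⁻¹
      = (((n + 1 : ℕ) : ℝ))⁻¹ := by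
    push_cast
    have h2 : ((n:ℝ) + 2) ≠ 0 := by positivity
    have h1 : ((n:ℝ) + 1) ≠ 0 := by positivity
    field_simp
    ring
  have h1 : tseq ε a σ n
      = ((Aseq ε a σ n + ε) ^ ((((n+1:ℕ):ℝ) + 1) / ((n+1:ℕ):ℝ))) ^ (((n + 2 : ℕ) : ℝ))⁻¹ := by
    rw [← Real.rpow_mul hB0, hexp, tseq]
  rw [h1, tseq, show n + 1 + 1 = n + 2 from rfl]
  exact Real.rpow_le_rpow hB0' (by exact_mod_cast hg) (by positivity)

lemma sseq_mono : Monotone (sseq ε a σ) :=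
  monotone_nat_of_le_succ (sseq_le_succ hε0 ha0 ha1 σ)

lemma tseq_anti : Antitone (tseq ε a σ) :=
  antitone_nat_of_succ_le (tseq_succ_le hε0 ha0 ha1 σ)

lemma sseq_le_tseq (n : ℕ) : sseq ε a σ n ≤ tseq ε a σ n :=
  Real.rpow_le_rpow (Aseq_pos hε0 ha0 ha1 σ n).le (by linarith) (by positivity)

lemma sseq_le_tseq' (k n : ℕ) : sseq ε a σ k ≤ tseq ε a σ n := by
  rcases le_total k n with h | h
  · exact le_trans (sseq_mono hε0 ha0 ha1 σ h) (sseq_le_tseq hε0 ha0 ha1 σ n)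
  · exact le_trans (sseq_le_tseq hε0 ha0 ha1 σ k) (tseq_anti hε0 ha0 ha1 σ h)

end

def alp (ε a : ℝ) (σ : ℕ → Bool) : ℝ := ⨆ n, sseq ε a σ n

section
variable {ε a : ℝ} (hε0 : 0 < ε) (ha0 : 0 ≤ a) (ha1 : a + ε < 1) (σ : ℕ → Bool)
include hε0 ha0 ha1

lemma bdd : BddAbove (Set.range (sseq ε a σ)) := by
  refine ⟨tseq ε a σ 0, ?_⟩
  rintro x ⟨k, rfl⟩
  exact sseq_le_tseq' hε0 ha0 ha1 σ k 0

lemma sseq_le_alp (n : ℕ) : sseq ε a σ n ≤ alp ε a σ :=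
  le_ciSup (bdd hε0 ha0 ha1 σ) n

lemma alp_le_tseq (n : ℕ) : alp ε a σ ≤ tseq ε a σ n :=
  ciSup_le fun k => sseq_le_tseq' hε0 ha0 ha1 σ k n

lemma alp_pow (n : ℕ) :
    Aseq ε a σ n ≤ alp ε a σ ^ (n + 1) ∧ alp ε a σ ^ (n + 1) ≤ Aseq ε a σ n + ε := by
  have hA0 := (Aseq_pos hε0 ha0 ha1 σ n).le
  have hs0 : (0:ℝ) ≤ sseq ε a σ n := Real.rpow_nonneg hA0 _
  have h1 : sseq ε a σ n ^ (n + 1) = Aseq ε a σ n :=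
    Real.rpow_inv_natCast_pow hA0 (by omega)
  have h2 : tseq ε a σ n ^ (n + 1) = Aseq ε a σ n + ε :=
    Real.rpow_inv_natCast_pow (by linarith) (by omega)
  constructor
  · rw [← h1]
    exact pow_le_pow_left₀ hs0 (sseq_le_alp hε0 ha0 ha1 σ n) _
  · rw [← h2]
    exact pow_le_pow_left₀ (le_trans hs0 (sseq_le_alp hε0 ha0 ha1 σ n))
      (alp_le_tseq hε0 ha0 ha1 σ n) _

lemma alp_gt_one : 1 < alp ε a σ := by
  have h := sseq_le_alp hε0 ha0 ha1 σ 0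
  have h2 : sseq ε a σ 0 = Aseq ε a σ 0 := by
    rw [sseq]
    norm_num
  have := one_le_Aseq hε0 ha0 ha1 σ 0
  have h3 : (2:ℝ) ≤ Aseq ε a σ 0 :=
    le_trans (by simpa using two_le_pow (ε := ε) 1 le_rfl) (Mseq_lower hε0 ha0 ha1 σ 0)
  rw [h2] at h
  linarith

lemma alp_mem : alp ε a σ ∈ {α : ℝ | 1 < α ∧
    ∀ n : ℕ, 1 ≤ n → Int.fract (α ^ n) ∈ Set.Icc a (a + ε)} := by
  refine ⟨alp_gt_one hε0 ha0 ha1 σ, fun n hn => ?_⟩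
  obtain ⟨k, rfl⟩ : ∃ k, n = k + 1 := ⟨n - 1, by omega⟩
  obtain ⟨hl, hr⟩ := alp_pow hε0 ha0 ha1 σ k
  rw [Aseq] at hl hr
  have hfr : Int.fract (alp ε a σ ^ (k+1)) = alp ε a σ ^ (k+1) - Mseq ε a σ k := by
    rw [← Int.fract_sub_intCast (alp ε a σ ^ (k+1)) (Mseq ε a σ k)]
    exact Int.fract_eq_self.mpr ⟨by linarith, by linarith⟩
  rw [hfr]
  exact ⟨by linarith, by linarith⟩
lemma sep {σ' : ℕ → Bool} (n : ℕ) (hM : Mseq ε a σ n = Mseq ε a σ' n)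
    (h1 : σ n = true) (h2 : σ' n = false) :
    alp ε a σ ^ (n + 2) < alp ε a σ' ^ (n + 2) := by
  have hex := exists_pair hε0 ha0 ha1 (n+1) (by omega) (Mseq ε a σ n)
    (Mseq_lower hε0 ha0 ha1 σ n)
  have hs := pick_spec hex
  have hMp : Mseq ε a σ (n+1) = (pick ε a (n+1) (Mseq ε a σ n)).1 := by
    rw [Mseq, h1]; simp
  have hMq : Mseq ε a σ' (n+1) = (pick ε a (n+1) (Mseq ε a σ n)).2 := by
    rw [Mseq, h2, ← hM]; simp
  have hu := (alp_pow hε0 ha0 ha1 σ (n+1)).2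
  have hv := (alp_pow hε0 ha0 ha1 σ' (n+1)).1
  rw [show n + 1 + 1 = n + 2 from rfl] at hu hv
  rw [Aseq, hMp] at hu
  rw [Aseq, hMq] at hv
  have hpq : ((pick ε a (n+1) (Mseq ε a σ n)).1 : ℝ) + 1
      ≤ ((pick ε a (n+1) (Mseq ε a σ n)).2 : ℝ) := by exact_mod_cast hs.1
  have hε1' : ε < 1 := by linarith
  linarith

omit hε0 ha0 ha1 in
lemma Mseq_congr {σ' : ℕ → Bool} (n : ℕ) (h : ∀ k < n, σ k = σ' k) :
    Mseq ε a σ n = Mseq ε a σ' n := by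
  induction n with
  | zero => rfl
  | succ n ih =>
    rw [Mseq, Mseq, ih (fun k hk => h k (by omega)), h n (by omega)]

lemma alp_injective : Function.Injective (alp ε a) := by
  intro σ σ' h
  by_contra hne
  have hnn : ∃ n, σ n ≠ σ' n := Function.ne_iff.mp hne
  set n := Nat.find hnn with hn
  have hfind : σ n ≠ σ' n := Nat.find_spec hnn
  have hmin : ∀ k < n, σ k = σ' k := fun k hk => not_not.mp (Nat.find_min hnn hk)
  have hM : Mseq ε a σ n = Mseq ε a σ' n := Mseq_congr σ n hmin
  cases h1 : σ n <;> cases h2 : σ' n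
  · exact hfind (h1.trans h2.symm)
  · have := sep hε0 ha0 ha1 σ' n hM.symm h2 h1
    rw [h] at this
    exact lt_irrefl _ this
  · have := sep hε0 ha0 ha1 σ n hM h1 h2
    rw [h] at this
    exact lt_irrefl _ this
  · exact hfind (h1.trans h2.symm)

end

end Stmt18Aux
end

theorem stmt_18 (ε a : ℝ) (hε0 : 0 < ε) (hε1 : ε < 1) (ha0 : 0 ≤ a) (ha1 : a + ε < 1) :
    ¬ Set.Countable {α : ℝ | 1 < α ∧
      ∀ n : ℕ, 1 ≤ n → Int.fract (α ^ n) ∈ Set.Icc a (a + ε)} := by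
  intro hc
  classical
  have hcs : Countable ↥{α : ℝ | 1 < α ∧
      ∀ n : ℕ, 1 ≤ n → Int.fract (α ^ n) ∈ Set.Icc a (a + ε)} := hc.to_subtype
  set g : (ℕ → Bool) → ↥{α : ℝ | 1 < α ∧
      ∀ n : ℕ, 1 ≤ n → Int.fract (α ^ n) ∈ Set.Icc a (a + ε)} :=
    fun σ => ⟨Stmt18Aux.alp ε a σ, Stmt18Aux.alp_mem hε0 ha0 ha1 σ⟩ with hgdef
  have hg : Function.Injective g := by
    intro σ σ' h
    exact Stmt18Aux.alp_injective hε0 ha0 ha1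
      (congrArg Subtype.val h : Stmt18Aux.alp ε a σ = Stmt18Aux.alp ε a σ')
  have hbool : Countable (ℕ → Bool) := hg.countable
  have hcnt : Countable (Set ℕ) := by
    have hf : Function.Injective (fun (s : Set ℕ) (n : ℕ) => decide (n ∈ s)) := by
      intro s t hst
      ext n
      have := congrFun hst n
      simpa using this
    exact hf.countable
  obtain ⟨g2, hg2⟩ := (countable_iff_exists_injective (Set ℕ)).mp hcnt
  exact Function.cantor_injective g2 hg2
end
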